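/- arXiv:1512.00079 — 6 statements merged into one kernel-verified Lean document; each statement's English description precedes it below -/
import Mathlib

section
/- Let n ≥ 1 and let N be a nontrivial normal subgroup of Houghton's group H_n. Then N ∩ FSym_n equals FAlt_n or N ∩ FSym_n equals FSym_n; in particular, N contains FAlt_n. -/
/-! ## Houghton's groups: basic setup -/

/-- The underlying set of Houghton's group: `n` rays of discrete points;
`(i, p)` is the point at position `p` on the ray `R_i`. -/
abbrev XH (n : ℕ) : Type := Fin n × ℕ

/-- `g` acts, outside a finite set, as the translation by `m i` on the ray `R_i`. -/
def HasTranslationVector {n : ℕ} (g : Equiv.Perm (XH n)) (m : Fin n → ℤ) : Prop :=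
  ∃ K : Finset (XH n), ∀ x : XH n, x ∉ K →
    (g x).1 = x.1 ∧ ((g x).2 : ℤ) = (x.2 : ℤ) + m x.1

/-- An eventual translation of `X_n`. -/
def IsEventualTranslation {n : ℕ} (g : Equiv.Perm (XH n)) : Prop :=
  ∃ m : Fin n → ℤ, HasTranslationVector g m

/-- Houghton's group `H_n`: the group of all eventual translations of `X_n`. -/
def Houghton (n : ℕ) : Subgroup (Equiv.Perm (XH n)) where
  carrier := {g | IsEventualTranslation g}
  one_mem' := ⟨0, ∅, fun x _ => by simp⟩
  mul_mem' := by
    rintro a b ⟨ma, Ka, hKa⟩ ⟨mb, Kb, hKb⟩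
    classical
    refine ⟨ma + mb, Kb ∪ Kb.image b ∪ Ka.image b.symm, fun x hx => ?_⟩
    simp only [Finset.mem_union, not_or] at hx
    have hxb : x ∉ Kb := hx.1.1
    have hbx : b x ∉ Ka := by
      intro hc
      exact hx.2 (Finset.mem_image.mpr ⟨b x, hc, b.symm_apply_apply x⟩)
    obtain ⟨hb1, hb2⟩ := hKb x hxb
    obtain ⟨ha1, ha2⟩ := hKa (b x) hbx
    refine ⟨?_, ?_⟩
    · show (a (b x)).1 = x.1
      rw [ha1, hb1]
    · show ((a (b x)).2 : ℤ) = (x.2 : ℤ) + (ma + mb) x.1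
      rw [ha2, hb1, hb2, Pi.add_apply]
      ring
  inv_mem' := by
    rintro a ⟨m, K, hK⟩
    classical
    refine ⟨-m, K.image a, fun x hx => ?_⟩
    have hy : a⁻¹ x ∉ K := by
      intro hc
      exact hx (Finset.mem_image.mpr ⟨a⁻¹ x, hc, a.apply_symm_apply x⟩)
    obtain ⟨e1, e2⟩ := hK _ hy
    rw [show a (a⁻¹ x) = x from a.apply_symm_apply x] at e1 e2
    refine ⟨e1.symm, ?_⟩
    rw [← e1] at e2
    rw [Pi.neg_apply]
    omega

/-- The subgroup of finitely supported permutations of `X_n`. -/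
def FSymSub (n : ℕ) : Subgroup (Equiv.Perm (XH n)) where
  carrier := {g | {x | g x ≠ x}.Finite}
  one_mem' := by simp
  mul_mem' := by
    intro a b ha hb
    apply Set.Finite.subset (ha.union hb)
    intro x hx
    by_cases h : b x = x
    · left
      show a x ≠ x
      simpa [Equiv.Perm.mul_apply, h] using hx
    · right; exact h
  inv_mem' := by
    intro a ha
    apply Set.Finite.subset ha
    intro x hx
    show a x ≠ x
    intro hc
    apply hx
    show a⁻¹ x = x
    conv_lhs => rw [← hc]
    exact a.symm_apply_apply x

/-- The subgroup of finitely supported even permutations of `X_n`: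
products of an even number of transpositions. -/
def FAltSub (n : ℕ) : Subgroup (Equiv.Perm (XH n)) where
  carrier := {g | ∃ l : List (Equiv.Perm (XH n)),
    (∀ τ ∈ l, τ.IsSwap) ∧ Even l.length ∧ l.prod = g}
  one_mem' := ⟨[], by simp, by simp, by simp⟩
  mul_mem' := by
    rintro a b ⟨la, hla, hea, rfl⟩ ⟨lb, hlb, heb, rfl⟩
    refine ⟨la ++ lb, ?_, ?_, List.prod_append⟩
    · intro τ hτ
      rcases List.mem_append.mp hτ with h | h
      exacts [hla τ h, hlb τ h]
    · simpa using hea.add heb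
  inv_mem' := by
    rintro a ⟨l, hl, he, rfl⟩
    refine ⟨(l.map fun x => x⁻¹).reverse, ?_, by simpa using he,
      (List.prod_inv_reverse l).symm⟩
    intro τ hτ
    rw [List.mem_reverse, List.mem_map] at hτ
    obtain ⟨σ, hσ, rfl⟩ := hτ
    obtain ⟨x, y, hxy, rfl⟩ := hl σ hσ
    exact ⟨x, y, hxy, by rw [Equiv.swap_inv]⟩

/-- `FSym_n` and `FAlt_n` viewed as subgroups of `H_n`. -/
def FSymIn (n : ℕ) : Subgroup (Houghton n) := (FSymSub n).comap (Houghton n).subtype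

def FAltIn (n : ℕ) : Subgroup (Houghton n) := (FAltSub n).comap (Houghton n).subtype

/-- The index of the first ray `R_1`. -/
def ray0 (n : ℕ) (hn : 0 < n) : Fin n := ⟨0, hn⟩

/-- The underlying function of the generator `g_i`. -/
def gFun (n : ℕ) (hn : 0 < n) (i : Fin n) : XH n → XH n := fun x =>
  if x.1 = ray0 n hn then (if x.2 = 0 then (i, 0) else (ray0 n hn, x.2 - 1))
  else if x.1 = i then (i, x.2 + 1) else x

/-- The inverse of `gFun`. -/
def gInvFun (n : ℕ) (hn : 0 < n) (i : Fin n) : XH n → XH n := fun x =>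
  if x.1 = i then (if x.2 = 0 then (ray0 n hn, 0) else (i, x.2 - 1))
  else if x.1 = ray0 n hn then (ray0 n hn, x.2 + 1) else x

/-- The generator `g_i` of `H_n` (as a permutation): it translates the first ray
down by one, sends `(1,1)` to `(i,1)` and translates the ray `R_i` up by one. -/
def gGen (n : ℕ) (hn : 0 < n) (i : Fin n) (hi : i ≠ ray0 n hn) : Equiv.Perm (XH n) where
  toFun := gFun n hn i
  invFun := gInvFun n hn i
  left_inv := by
    rintro ⟨j, p⟩
    show gInvFun n hn i (gFun n hn i (j, p)) = (j, p)
    simp only [gFun, gInvFun]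
    split_ifs <;> simp_all [Prod.ext_iff] <;> omega
  right_inv := by
    rintro ⟨j, p⟩
    show gFun n hn i (gInvFun n hn i (j, p)) = (j, p)
    simp only [gFun, gInvFun]
    split_ifs <;> simp_all [Prod.ext_iff] <;> omega

/-- The translation vector of `g_i`. -/
def gVec (n : ℕ) (hn : 0 < n) (i : Fin n) : Fin n → ℤ :=
  fun j => if j = ray0 n hn then -1 else if j = i then 1 else 0

theorem gGen_mem (n : ℕ) (hn : 0 < n) (i : Fin n) (hi : i ≠ ray0 n hn) :
    gGen n hn i hi ∈ Houghton n := by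
  refine ⟨gVec n hn i, {(ray0 n hn, 0)}, ?_⟩
  rintro ⟨j, p⟩ hx
  rw [Finset.mem_singleton] at hx
  have hx' : j ≠ ray0 n hn ∨ p ≠ 0 := by
    by_contra h
    push_neg at h
    exact hx (by rw [h.1, h.2])
  show (gFun n hn i (j, p)).1 = j ∧ ((gFun n hn i (j, p)).2 : ℤ) = (p : ℤ) + gVec n hn i j
  simp only [gFun, gVec]
  split_ifs <;> simp_all [Prod.ext_iff] <;> omega

/-- The generator `g_i` as an element of `H_n`. -/
def hGen (n : ℕ) (hn : 0 < n) (i : Fin n) (hi : i ≠ ray0 n hn) : Houghton n :=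
  ⟨gGen n hn i hi, gGen_mem n hn i hi⟩

/-- The transposition `α` exchanging `(1,1)` and `(1,2)`. -/
def alphaPerm (n : ℕ) (hn : 0 < n) : Equiv.Perm (XH n) :=
  Equiv.swap (ray0 n hn, 0) (ray0 n hn, 1)

theorem alphaPerm_mem (n : ℕ) (hn : 0 < n) : alphaPerm n hn ∈ Houghton n := by
  refine ⟨0, {(ray0 n hn, 0), (ray0 n hn, 1)}, ?_⟩
  intro x hx
  simp only [Finset.mem_insert, Finset.mem_singleton, not_or] at hx
  rw [show alphaPerm n hn x = x from Equiv.swap_apply_of_ne_of_ne hx.1 hx.2]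
  simp

/-- `α` as an element of `H_n`. -/
def hAlpha (n : ℕ) (hn : 0 < n) : Houghton n := ⟨alphaPerm n hn, alphaPerm_mem n hn⟩

theorem alphaPerm_mem_FSym (n : ℕ) (hn : 0 < n) : alphaPerm n hn ∈ FSymSub n := by
  show {x | alphaPerm n hn x ≠ x}.Finite
  apply Set.Finite.subset ((Set.finite_singleton (ray0 n hn, 1)).insert (ray0 n hn, 0))
  intro x hx
  by_contra hc
  simp only [Set.mem_insert_iff, Set.mem_singleton_iff, not_or] at hc
  exact hx (Equiv.swap_apply_of_ne_of_ne hc.1 hc.2)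

theorem swap_mem_houghton {n : ℕ} (P Q : XH n) : Equiv.swap P Q ∈ Houghton n := by
  classical
  refine ⟨0, {P, Q}, ?_⟩
  intro x hx
  simp only [Finset.mem_insert, Finset.mem_singleton, not_or] at hx
  rw [Equiv.swap_apply_of_ne_of_ne hx.1 hx.2]
  simp

/-- The transposition exchanging two points, as an element of `H_n`. -/
def hSwap {n : ℕ} (P Q : XH n) : Houghton n := ⟨Equiv.swap P Q, swap_mem_houghton P Q⟩

/-- The set of generators `{g_2, …, g_n}` of `H_n`. -/
def houghtonGensOnly (n : ℕ) (hn : 0 < n) : Set (Houghton n) :=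
  {x | ∃ (i : Fin n) (hi : i ≠ ray0 n hn), x = hGen n hn i hi}

/-- The chosen generating set of `H_n`: `{g_2, …, g_n}` for `n ≠ 2`,
and `{g_2, α}` for `n = 2`. -/
def houghtonGenSet (n : ℕ) (hn : 0 < n) : Set (Houghton n) :=
  if n = 2 then houghtonGensOnly n hn ∪ {hAlpha n hn} else houghtonGensOnly n hn

/-- Word length with respect to a set of generators (and their inverses). -/
noncomputable def wordLength {G : Type*} [Group G] (S : Set G) (g : G) : ℕ :=
  sInf {k | ∃ l : List G, (∀ x ∈ l, x ∈ S ∨ x⁻¹ ∈ S) ∧ l.length = k ∧ l.prod = g}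

/-- The growth rate of an endomorphism `φ`:
`GR(φ) = sup_g limsup_k |φ^k(g)|^{1/k}`. -/
noncomputable def growthRate {G : Type*} [Group G] (S : Set G) (φ : G →* G) : ℝ :=
  ⨆ g : G, Filter.limsup
    (fun k : ℕ => (wordLength S ((⇑φ)^[k] g) : ℝ) ^ (1 / (k : ℝ))) Filter.atTop

/-- The orbit of `x` under the permutation `h`. -/
def permOrbit {α : Type*} (h : Equiv.Perm α) (x : α) : Set α :=
  Set.range (fun k : ℤ => (h ^ k) x)

/-- `x` has infinite orbit under `h` (`x` is an essential point of `h`). -/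
def InfiniteOrbit {α : Type*} (h : Equiv.Perm α) (x : α) : Prop :=
  (permOrbit h x).Infinite

/-- The image `φ(g_i)` as a permutation of `X_n`. -/
def imageGen {n : ℕ} (h0 : 0 < n) (φ : Houghton n →* Houghton n)
    (i : Fin n) (hi : i ≠ ray0 n h0) : Equiv.Perm (XH n) :=
  ↑(φ (hGen n h0 i hi))

/-- The image `φ(α)` as a permutation of `X_n`. -/
def imageAlpha {n : ℕ} (h0 : 0 < n) (φ : Houghton n →* Houghton n) : Equiv.Perm (XH n) :=
  ↑(φ (hAlpha n h0))

/-- A transposition-orbit of an involution: a pair `{x, h x}` with `h x ≠ x`. -/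
def TOrbit {Ω : Type*} (h : Equiv.Perm Ω) (T : Set Ω) : Prop :=
  ∃ x, h x ≠ x ∧ T = {x, h x}

/-- The zero-sum vectors in `ℤ^n`. -/
def zeroSum (n : ℕ) : AddSubgroup (Fin n → ℤ) where
  carrier := {m | ∑ j, m j = 0}
  zero_mem' := by simp
  add_mem' := by
    intro a b ha hb
    simp only [Set.mem_setOf_eq] at *
    simp [Finset.sum_add_distrib, ha, hb]
  neg_mem' := by
    intro a ha
    simp only [Set.mem_setOf_eq] at *
    simp [ha]

/-! Let `g ≠ 1` lie in `N` and move `p`. For a transposition `(p q)`, the commutator of `g` and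
`(p q)` is `(g p  g q)(p q)`; with `q` fresh this is either a product of two disjoint
transpositions or, if `g` fixes `q`, a 3-cycle, whose product with a suitable conjugate is again a
product of two disjoint transpositions. Transpositions lie in `H_n`, so `N` is normalized by them,
and conjugating by transpositions one point at a time turns one product of two disjoint
transpositions into any other. Every product of two transpositions is a product of two such, so
`FAlt_n ≤ N`. Since `FAlt_n` has index two in `FSym_n`, `N ∩ FSym_n` is one of the two. -/

open Equiv

section SwapProducts

variable {α : Type*} [DecidableEq α]

theorem Equiv.Perm.exists_isSwap_list_prod_eq {f : Perm α} (hf : {x | f x ≠ x}.Finite) :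
    ∃ l : List (Perm α), (∀ τ ∈ l, τ.IsSwap) ∧ l.prod = f := by
  have hmem : f ∈ (Subgroup.closure {σ : Perm α | σ.IsSwap}).toSubmonoid :=
    mem_closure_isSwap'.mpr hf
  rw [Subgroup.closure_toSubmonoid] at hmem
  obtain ⟨l, hl, rfl⟩ := Submonoid.exists_list_of_mem_closure hmem
  refine ⟨l, fun τ hτ => ?_, rfl⟩
  rcases hl τ hτ with h | ⟨x, y, hxy, h⟩
  · exact h
  · exact ⟨x, y, hxy, by rw [← inv_inv τ, h, swap_inv]⟩

theorem List.prod_mem_of_even_length {G S : Type*} [Monoid G] [SetLike S G]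
    [SubmonoidClass S G] {M : S} {p : G → Prop} (hpair : ∀ x y, p x → p y → x * y ∈ M) :
    ∀ {l : List G}, (∀ x ∈ l, p x) → Even l.length → l.prod ∈ M
  | [], _, _ => one_mem M
  | [_], _, he => by simp at he
  | x :: y :: t, hl, he => by
    rw [List.prod_cons, List.prod_cons, ← mul_assoc]
    refine mul_mem (hpair x y (hl x (by simp)) (hl y (by simp))) ?_
    exact List.prod_mem_of_even_length hpair (fun z hz => hl z (by simp [hz]))
      (by simpa [parity_simps] using he)

theorem Equiv.swap_mul_swap_mul_swap_mul_swap_of_ne {x p q r : α} (hxp : x ≠ p) (hxq : x ≠ q)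
    (hxr : x ≠ r) (hpq : p ≠ q) (hpr : p ≠ r) (hqr : q ≠ r) :
    swap x q * swap p q * (swap x r * swap p r) = swap p q * swap x r := by
  ext y
  simp only [Perm.mul_apply, swap_apply_def]
  split_ifs <;> simp_all

theorem Equiv.Perm.conj_swap_mul_swap (σ : Perm α) (a b c d : α) :
    σ * (swap a b * swap c d) * σ⁻¹ = swap (σ a) (σ b) * swap (σ c) (σ d) := by
  rw [swap_apply_apply, swap_apply_apply]
  group

theorem Infinite.exists_notMem_list [Infinite α] (l : List α) : ∃ x, x ∉ l := by
  simpa using Infinite.exists_notMem_finset l.toFinset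

end SwapProducts

def IsNormalizedBySwaps {α : Type*} [DecidableEq α] (M : Subgroup (Perm α)) : Prop :=
  ∀ x y : α, ∀ g ∈ M, swap x y * g * (swap x y)⁻¹ ∈ M

namespace IsNormalizedBySwaps

variable {α : Type*} [DecidableEq α] {M : Subgroup (Perm α)}

theorem swap_mul_swap_mem_of_mem (hM : IsNormalizedBySwaps M) {g : Perm α} (hg : g ∈ M)
    (x y : α) : swap (g x) (g y) * swap x y ∈ M := by
  have h : g * (swap x y * g⁻¹ * (swap x y)⁻¹) ∈ M := mul_mem hg (hM x y _ (inv_mem hg))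
  rwa [← mul_assoc, ← mul_assoc, ← swap_apply_apply, swap_inv] at h

theorem conj_mem (hM : IsNormalizedBySwaps M) {a b c d : α} (h : swap a b * swap c d ∈ M)
    (x y : α) :
    swap (swap x y a) (swap x y b) * swap (swap x y c) (swap x y d) ∈ M := by
  rw [← Perm.conj_swap_mul_swap]
  exact hM x y _ h

theorem replace_fst (hM : IsNormalizedBySwaps M) {a b c d e : α} (habcd : [a, b, c, d].Nodup)
    (he : e ∉ [b, c, d]) (h : swap a b * swap c d ∈ M) : swap e b * swap c d ∈ M := by
  have := hM.conj_mem h a e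
  simp only [List.nodup_cons, List.mem_cons, List.not_mem_nil, or_false, not_or] at habcd
  simp only [List.mem_cons, List.not_mem_nil, or_false, not_or] at he
  rwa [swap_apply_left, swap_apply_of_ne_of_ne (Ne.symm habcd.1.1) (Ne.symm he.1),
    swap_apply_of_ne_of_ne (Ne.symm habcd.1.2.1) (Ne.symm he.2.1),
    swap_apply_of_ne_of_ne (Ne.symm habcd.1.2.2) (Ne.symm he.2.2)] at this

theorem replace_snd (hM : IsNormalizedBySwaps M) {a b c d e : α} (habcd : [a, b, c, d].Nodup)
    (he : e ∉ [a, c, d]) (h : swap a b * swap c d ∈ M) : swap a e * swap c d ∈ M := by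
  rw [swap_comm] at h ⊢
  exact hM.replace_fst (by grind) (by grind) h

theorem swap_mul_swap_mem_of_disjoint (hM : IsNormalizedBySwaps M) {a b c d u v w z : α}
    (habcd : [a, b, c, d].Nodup) (huvwz : [u, v, w, z].Nodup)
    (hdisj : [u, v, w, z].Disjoint [a, b, c, d]) (h : swap a b * swap c d ∈ M) :
    swap u v * swap w z ∈ M := by
  simp only [List.disjoint_cons_right, List.mem_cons, List.not_mem_nil, or_false, not_or]
    at hdisj
  have h₁ := hM.replace_fst (e := u) habcd (by grind) h
  have h₂ := hM.replace_snd (e := v) (by grind) (by grind) h₁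
  have h₃ : swap c d * swap u v ∈ M :=
    (Perm.disjoint_swap_swap (show [u, v, c, d].Nodup by grind)).commute.eq ▸ h₂
  have h₄ := hM.replace_fst (e := w) (by grind) (by grind) h₃
  have h₅ := hM.replace_snd (e := z) (by grind) (by grind) h₄
  exact (Perm.disjoint_swap_swap (show [w, z, u, v].Nodup by grind)).commute.eq ▸ h₅

theorem swap_mul_swap_mem_of_nodup [Infinite α] (hM : IsNormalizedBySwaps M) {a b c d : α}
    (habcd : [a, b, c, d].Nodup) (h : swap a b * swap c d ∈ M) {a' b' c' d' : α}
    (habcd' : [a', b', c', d'].Nodup) : swap a' b' * swap c' d' ∈ M := by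
  obtain ⟨u, hu⟩ := Infinite.exists_notMem_list [a, b, c, d, a', b', c', d']
  obtain ⟨v, hv⟩ := Infinite.exists_notMem_list [u, a, b, c, d, a', b', c', d']
  obtain ⟨w, hw⟩ := Infinite.exists_notMem_list [v, u, a, b, c, d, a', b', c', d']
  obtain ⟨z, hz⟩ := Infinite.exists_notMem_list [w, v, u, a, b, c, d, a', b', c', d']
  simp only [List.mem_cons, List.not_mem_nil, or_false, not_or] at hu hv hw hz
  have huvwz : [u, v, w, z].Nodup := by grind
  refine hM.swap_mul_swap_mem_of_disjoint huvwz habcd' ?_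
    (hM.swap_mul_swap_mem_of_disjoint habcd huvwz ?_ h) <;>
    simp only [List.disjoint_cons_right, List.disjoint_nil_right, List.mem_cons,
      List.not_mem_nil, or_false, not_or, and_true] <;>
    grind

theorem exists_nodup_swap_mul_swap_mem [Infinite α] (hM : IsNormalizedBySwaps M)
    (hM₀ : M ≠ ⊥) : ∃ a b c d : α, [a, b, c, d].Nodup ∧ swap a b * swap c d ∈ M := by
  obtain ⟨g, hgM, hg⟩ := M.bot_or_exists_ne_one.resolve_left hM₀
  obtain ⟨p, hp⟩ : ∃ p, g p ≠ p := by
    by_contra! h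
    exact hg (Equiv.ext h)
  obtain ⟨q, hq⟩ := Infinite.exists_notMem_list [p, g p, g⁻¹ p]
  simp only [List.mem_cons, List.not_mem_nil, or_false, not_or] at hq
  have hgq_ne_p : g q ≠ p := fun h => hq.2.2 (Perm.eq_inv_iff_eq.mpr h)
  have hcomm := hM.swap_mul_swap_mem_of_mem hgM p q
  by_cases hgq : g q = q
  · -- `hcomm` is the 3-cycle `(p, g p, q)`; its product with a conjugate is `(p q)(g p r)`
    rw [hgq] at hcomm
    obtain ⟨r, hr⟩ := Infinite.exists_notMem_list [p, g p, q]
    simp only [List.mem_cons, List.not_mem_nil, or_false, not_or] at hr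
    have hconj := hM.conj_mem hcomm q r
    rw [swap_apply_of_ne_of_ne (Ne.symm hq.2.1) (Ne.symm hr.2.1), swap_apply_left,
      swap_apply_of_ne_of_ne (Ne.symm hq.1) (Ne.symm hr.1)] at hconj
    refine ⟨p, q, g p, r, by grind, ?_⟩
    rw [← swap_mul_swap_mul_swap_mul_swap_of_ne hp (Ne.symm hq.2.1) (Ne.symm hr.2.1)
      (Ne.symm hq.1) (Ne.symm hr.1) (Ne.symm hr.2.2)]
    exact mul_mem hcomm hconj
  · have hgp_ne_gq : g p ≠ g q := g.injective.ne (Ne.symm hq.1)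
    exact ⟨g p, g q, p, q, by grind, hcomm⟩

theorem swap_mul_swap_mem [Infinite α] (hM : IsNormalizedBySwaps M) (hM₀ : M ≠ ⊥)
    {a b c d : α} (hab : a ≠ b) (hcd : c ≠ d) : swap a b * swap c d ∈ M := by
  obtain ⟨a₀, b₀, c₀, d₀, hnodup, hmem⟩ := hM.exists_nodup_swap_mul_swap_mem hM₀
  obtain ⟨e, he⟩ := Infinite.exists_notMem_list [a, b, c, d]
  obtain ⟨f, hf⟩ := Infinite.exists_notMem_list [e, a, b, c, d]
  simp only [List.mem_cons, List.not_mem_nil, or_false, not_or] at he hf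
  -- `(a b)(c d) = (a b)(e f) · (e f)(c d)` with `e`, `f` fresh
  rw [← mul_swap_mul_self e f (swap a b), mul_assoc]
  exact mul_mem (hM.swap_mul_swap_mem_of_nodup hnodup hmem (by grind))
    (hM.swap_mul_swap_mem_of_nodup hnodup hmem (by grind))

theorem list_prod_mem [Infinite α] (hM : IsNormalizedBySwaps M) (hM₀ : M ≠ ⊥)
    {l : List (Perm α)} (hl : ∀ τ ∈ l, τ.IsSwap) (he : Even l.length) : l.prod ∈ M :=
  List.prod_mem_of_even_length (fun _ _ ⟨_, _, hab, hσ⟩ ⟨_, _, hcd, hτ⟩ =>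
    hσ ▸ hτ ▸ hM.swap_mul_swap_mem hM₀ hab hcd) hl he

end IsNormalizedBySwaps

section Houghton

variable {n : ℕ}

theorem FAltSub_le_FSymSub : FAltSub n ≤ FSymSub n := by
  rintro _ ⟨l, hl, -, rfl⟩
  refine list_prod_mem fun τ hτ => ?_
  obtain ⟨x, y, -, rfl⟩ := hl τ hτ
  exact finite_compl_fixedBy_swap

theorem FAltIn_le_FSymIn : FAltIn n ≤ FSymIn n :=
  Subgroup.comap_mono FAltSub_le_FSymSub

theorem exists_odd_isSwap_list_prod_eq {g : Perm (XH n)} (hg : g ∈ FSymSub n)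
    (hg' : g ∉ FAltSub n) :
    ∃ l : List (Perm (XH n)), (∀ τ ∈ l, τ.IsSwap) ∧ Odd l.length ∧ l.prod = g := by
  obtain ⟨l, hl, rfl⟩ := Perm.exists_isSwap_list_prod_eq hg
  exact ⟨l, hl, Nat.not_even_iff_odd.mp fun he => hg' ⟨l, hl, he, rfl⟩, rfl⟩

theorem mul_mem_FAltSub_of_notMem {g s : Perm (XH n)} (hg : g ∈ FSymSub n)
    (hg' : g ∉ FAltSub n) (hs : s.IsSwap) : g * s ∈ FAltSub n := by
  obtain ⟨l, hl, hodd, rfl⟩ := exists_odd_isSwap_list_prod_eq hg hg'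
  refine ⟨l ++ [s], ?_, by simpa [Nat.even_add_one] using hodd, by simp⟩
  simpa [or_imp, forall_and] using ⟨hl, hs⟩

theorem mul_inv_mem_FAltSub_of_notMem {g h : Perm (XH n)} (hg : g ∈ FSymSub n)
    (hg' : g ∉ FAltSub n) (hh : h ∈ FSymSub n) (hh' : h ∉ FAltSub n) :
    h * g⁻¹ ∈ FAltSub n := by
  obtain ⟨l, hl, hodd, rfl⟩ := exists_odd_isSwap_list_prod_eq hg hg'
  obtain ⟨s, hs⟩ := List.exists_mem_of_length_pos hodd.pos
  have := mul_mem (mul_mem_FAltSub_of_notMem hh hh' (hl s hs))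
    (inv_mem (mul_mem_FAltSub_of_notMem hg hg' (hl s hs)))
  rwa [mul_inv_rev, mul_assoc, mul_inv_cancel_left] at this

theorem eq_FAltIn_or_eq_FSymIn {K : Subgroup (Houghton n)} (hAK : FAltIn n ≤ K)
    (hKS : K ≤ FSymIn n) : K = FAltIn n ∨ K = FSymIn n := by
  by_cases hKA : K ≤ FAltIn n
  · exact .inl (le_antisymm hKA hAK)
  refine .inr (le_antisymm hKS fun h hh => ?_)
  by_cases hhA : h ∈ FAltIn n
  · exact hAK hhA
  obtain ⟨g, hgK, hgA⟩ := SetLike.not_le_iff_exists.mp hKA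
  have hhg : h * g⁻¹ ∈ FAltIn n := mul_inv_mem_FAltSub_of_notMem (hKS hgK) hgA hh hhA
  simpa using mul_mem (hAK hhg) hgK

theorem isNormalizedBySwaps_map_subtype {N : Subgroup (Houghton n)} (hN : N.Normal) :
    IsNormalizedBySwaps (N.map (Houghton n).subtype) := by
  rintro x y _ ⟨g, hg, rfl⟩
  exact ⟨_, hN.conj_mem g hg (hSwap x y), rfl⟩

theorem FAltIn_le_of_normal (hn : 0 < n) {N : Subgroup (Houghton n)} (hN : N.Normal)
    (hN₀ : N ≠ ⊥) : FAltIn n ≤ N := by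
  have : Nonempty (Fin n) := ⟨⟨0, hn⟩⟩
  have hM₀ : N.map (Houghton n).subtype ≠ ⊥ := by
    rwa [Ne, Subgroup.map_eq_bot_iff_of_injective _ (Houghton n).subtype_injective]
  rintro g ⟨l, hl, he, hg⟩
  rw [← Subgroup.mem_map_iff_mem (Houghton n).subtype_injective]
  exact hg ▸ (isNormalizedBySwaps_map_subtype hN).list_prod_mem hM₀ hl he

end Houghton

/-- For `n ≥ 1`, every nontrivial normal subgroup `N` of `H_n`
satisfies `N ⊓ FSym_n = FAlt_n` or `N ⊓ FSym_n = FSym_n`; in particular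
`FAlt_n ≤ N`. -/
theorem normal_subgroup_inter_FSym
    (n : ℕ) (hn : 1 ≤ n) (N : Subgroup (Houghton n)) (hN : N.Normal) (hnt : N ≠ ⊥) :
    (N ⊓ FSymIn n = FAltIn n ∨ N ⊓ FSymIn n = FSymIn n) ∧ FAltIn n ≤ N := by
  have hAN : FAltIn n ≤ N := FAltIn_le_of_normal hn hN hnt
  exact ⟨eq_FAltIn_or_eq_FSymIn (le_inf hAN FAltIn_le_FSymIn) inf_le_right, hAN⟩
end

section
/- For every n ≥ 1, Houghton's group H_n is not residually finite: there exists a nontrivial element g ∈ H_n such that for every normal subgroup N of H_n of finite index, g ∈ N (equivalently, every homomorphism from H_n to a finite group sends g to the identity). -/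
/-!
A finite quotient cannot separate the infinitely many transpositions `(a x)`, so two of them,
`(a x)` and `(a y)`, have the same image and the 3-cycle `(a x)(a y)` dies in the quotient.
Conjugating by transpositions moves it to any 3-cycle `(a b)(a c)`, so a fixed nontrivial
3-cycle is killed by every homomorphism to a finite group.
-/

open Equiv

section SwapClosed

variable {α : Type*} [DecidableEq α] {G : Subgroup (Perm α)} (hG : ∀ x y, swap x y ∈ G)
  {H : Type*} [Group H] (f : G →* H)

include hG

lemma exists_map_swap_mul_swap_eq_one [Finite H] {s : Set α} (hs : s.Infinite) (a : α) :
    ∃ x ∈ s, ∃ y ∈ s, x ≠ y ∧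
      f ⟨swap a x * swap a y, G.mul_mem (hG a x) (hG a y)⟩ = 1 := by
  obtain ⟨x, hx, y, hy, hxy, hfxy⟩ := hs.exists_ne_map_eq_of_mapsTo
    (f := fun x => f ⟨swap a x, hG a x⟩) (Set.mapsTo_univ _ _) Set.finite_univ
  refine ⟨x, hx, y, hy, hxy, ?_⟩
  have hsplit : (⟨swap a x * swap a y, G.mul_mem (hG a x) (hG a y)⟩ : G) =
      ⟨swap a x, hG a x⟩ * ⟨swap a y, hG a y⟩ := rfl
  rw [hsplit, map_mul, ← hfxy, ← map_mul, ← map_one f]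
  exact congrArg f (Subtype.ext (swap_mul_self a x))

lemma map_swap_mul_swap_eq_one [Infinite α] [Finite H] {a b c : α} (hab : a ≠ b) (hac : a ≠ c)
    (hbc : b ≠ c) : f ⟨swap a b * swap a c, G.mul_mem (hG a b) (hG a c)⟩ = 1 := by
  obtain ⟨x, hx, y, hy, hxy, hf⟩ := exists_map_swap_mul_swap_eq_one hG f
    (Set.toFinite {a, b, c}).infinite_compl a
  simp only [Set.mem_compl_iff, Set.mem_insert_iff, Set.mem_singleton_iff, not_or] at hx hy
  obtain ⟨hxa, -, hxc⟩ := hx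
  obtain ⟨hya, -, -⟩ := hy
  set σ : Perm α := swap x b * swap y c
  have hσa : σ a = a := by
    simp only [σ, Perm.mul_apply, swap_apply_of_ne_of_ne (Ne.symm hya) hac,
      swap_apply_of_ne_of_ne (Ne.symm hxa) hab]
  have hσx : σ x = b := by
    simp only [σ, Perm.mul_apply, swap_apply_of_ne_of_ne hxy hxc, swap_apply_left]
  have hσy : σ y = c := by
    simp only [σ, Perm.mul_apply, swap_apply_left, swap_apply_of_ne_of_ne (Ne.symm hxc) hbc.symm]
  have hconj : σ * (swap a x * swap a y) * σ⁻¹ = swap a b * swap a c :=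
    calc σ * (swap a x * swap a y) * σ⁻¹
        = (σ * swap a x * σ⁻¹) * (σ * swap a y * σ⁻¹) := by group
      _ = swap (σ a) (σ x) * swap (σ a) (σ y) := by rw [swap_apply_apply, swap_apply_apply]
      _ = swap a b * swap a c := by rw [hσa, hσx, hσy]
  have hσG : σ ∈ G := G.mul_mem (hG x b) (hG y c)
  have hconjG : (⟨swap a b * swap a c, G.mul_mem (hG a b) (hG a c)⟩ : G) =
      ⟨σ, hσG⟩ * ⟨swap a x * swap a y, G.mul_mem (hG a x) (hG a y)⟩ * ⟨σ, hσG⟩⁻¹ :=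
    Subtype.ext hconj.symm
  rw [hconjG, map_mul, map_mul, hf, mul_one, map_inv, mul_inv_cancel]

end SwapClosed

lemma swap_mul_swap_ne_one {α : Type*} [DecidableEq α] {a b c : α} (hbc : b ≠ c) :
    swap a b * swap a c ≠ 1 := by
  intro h
  have := congrArg (· c) h
  simp [hbc] at this

/-- For every `n ≥ 1`, Houghton's group `H_n` is not residually
finite: there is a nontrivial element lying in every finite-index normal
subgroup, equivalently killed by every homomorphism to a finite group. -/
theorem houghton_not_residually_finite (n : ℕ) (hn : 1 ≤ n) :
    ∃ g : Houghton n, g ≠ 1 ∧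
      (∀ N : Subgroup (Houghton n), N.Normal → N.FiniteIndex → g ∈ N) ∧
      (∀ (H : Type) [Group H] [Finite H] (f : Houghton n →* H), f g = 1) := by
  have : Nonempty (Fin n) := ⟨⟨0, hn⟩⟩
  let P : ℕ → XH n := fun p => (⟨0, hn⟩, p)
  have hP : P.Injective := fun p q h => congrArg Prod.snd h
  let g : Houghton n := hSwap (P 0) (P 1) * hSwap (P 0) (P 2)
  have hkill (H : Type) [Group H] [Finite H] (f : Houghton n →* H) : f g = 1 :=
    map_swap_mul_swap_eq_one swap_mem_houghton f (hP.ne (by decide)) (hP.ne (by decide))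
      (hP.ne (by decide))
  refine ⟨g, fun h => swap_mul_swap_ne_one (hP.ne (by decide)) (congrArg Subtype.val h),
    fun N _ _ => ?_, hkill⟩
  exact (QuotientGroup.eq_one_iff g).mp (hkill _ (QuotientGroup.mk' N))
end

section
/- For every n ≥ 1, Houghton's group H_n is Hopfian: every surjective group endomorphism of H_n is injective (hence an automorphism). -/
/-! Commutators of eventual translations have translation vector `0`, so the commutator subgroup
of `H_n` is finitely supported. A nontrivial normal subgroup `N` of `H_n` contains a nontrivial
finitely supported element `⁅g, swap x z⁆`; on a finite set `s` of at least five points containing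
its support, `N` therefore meets `Perm s` in a nontrivial normal subgroup, which contains the
alternating group `⁅Perm s, Perm s⁆`. Taking `s` large, `N` contains the second derived subgroup of
`H_n`. A surjective endomorphism maps that subgroup onto itself, so a nontrivial kernel would make
`H_n` solvable, while `H_n` contains the non-solvable finitary symmetric group. -/

open Equiv Equiv.Perm
open scoped commutatorElement

namespace Equiv.Perm

variable {α : Type*} [DecidableEq α]

theorem finite_setOf_ofSubtype_apply_ne (s : Finset α) (σ : Perm s) :
    {x | ofSubtype σ x ≠ x}.Finite :=
  s.finite_toSet.subset fun x hx => by
    by_contra hxs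
    exact hx (ofSubtype_apply_of_not_mem σ hxs)

theorem exists_ofSubtype_eq {u : Perm α} {s : Finset α} (hu : {x | u x ≠ x} ⊆ s) :
    ∃ σ : Perm s, ofSubtype σ = u := by
  have hmem : ∀ x, u x ∈ s ↔ x ∈ s := fun x => by
    by_cases hx : u x = x
    · rw [hx]
    · exact iff_of_true (hu fun h => hx (u.injective h)) (hu hx)
  exact ⟨u.subtypePerm hmem, ofSubtype_subtypePerm hmem fun x hx => hu hx⟩

variable {N : Subgroup (Perm α)}

theorem range_ofSubtype_le_normalizer (hN : ∀ a b : α, swap a b ∈ Subgroup.normalizer N)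
    (s : Finset α) : (ofSubtype : Perm s →* Perm α).range ≤ Subgroup.normalizer N := by
  rw [MonoidHom.range_eq_map, ← closure_isSwap, MonoidHom.map_closure, Subgroup.closure_le]
  rintro _ ⟨_, ⟨a, b, -, rfl⟩, rfl⟩
  rw [ofSubtype_swap_eq]
  exact hN a b

theorem normal_comap_ofSubtype (hN : ∀ a b : α, swap a b ∈ Subgroup.normalizer N)
    (s : Finset α) : (N.comap (ofSubtype : Perm s →* Perm α)).Normal where
  conj_mem k hk u := by
    have hu := range_ofSubtype_le_normalizer hN s ⟨u, rfl⟩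
    simpa only [Subgroup.mem_comap, map_mul, map_inv] using
      (Subgroup.mem_normalizer_iff.mp hu _).mp hk

theorem exists_swap_mul_swap_mem_ne_one [Infinite α]
    (hN : ∀ a b : α, swap a b ∈ Subgroup.normalizer N) (hN1 : N ≠ ⊥) :
    ∃ a b c d : α, swap a b * swap c d ∈ N ∧ swap a b * swap c d ≠ 1 := by
  obtain ⟨g, hgN, hg1⟩ := N.bot_or_exists_ne_one.resolve_left hN1
  obtain ⟨x, hx⟩ : ∃ x, g x ≠ x := not_forall.mp fun h => hg1 (Perm.ext h)
  obtain ⟨z, hz⟩ := Infinite.exists_notMem_finset ({x, g x} : Finset α)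
  simp only [Finset.mem_insert, Finset.mem_singleton, not_or] at hz
  -- `swap (g x) (g z) * swap x z = ⁅g, swap x z⁆`, and `z ∉ {x, g x}` makes it move `x`
  refine ⟨g x, g z, x, z, ?_, fun h => ?_⟩
  · have h := (Subgroup.mem_normalizer_iff.mp (hN x z) g⁻¹).mp (inv_mem hgN)
    simpa [swap_apply_apply, mul_assoc] using mul_mem hgN h
  · have hxx := congrArg (· x) h
    simp only [Perm.mul_apply, swap_apply_left, Perm.one_apply, swap_apply_def] at hxx
    split_ifs at hxx <;> simp_all

theorem commutatorElement_mem_of_finite [Infinite α]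
    (hN : ∀ a b : α, swap a b ∈ Subgroup.normalizer N) (hN1 : N ≠ ⊥) {u v : Perm α}
    (hu : {x | u x ≠ x}.Finite) (hv : {x | v x ≠ x}.Finite) : ⁅u, v⁆ ∈ N := by
  obtain ⟨a, b, c, d, hmem, hne⟩ := exists_swap_mul_swap_mem_ne_one hN hN1
  let T : Finset α := {a, b, c, d} ∪ hu.toFinset ∪ hv.toFinset
  obtain ⟨s, hTs, hs⟩ := Infinite.exists_superset_card_eq T (T.card + 5) (by omega)
  have h5 : 5 ≤ Nat.card s := by simp [hs]
  let w : Perm s := swap ⟨a, hTs (by simp [T])⟩ ⟨b, hTs (by simp [T])⟩ *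
    swap ⟨c, hTs (by simp [T])⟩ ⟨d, hTs (by simp [T])⟩
  have hw : ofSubtype w = swap a b * swap c d := by
    simp only [w, map_mul, ofSubtype_swap_eq]
  have : Nontrivial (N.comap (ofSubtype : Perm s →* Perm α)) :=
    (Subgroup.nontrivial_iff_exists_ne_one _).mpr
      ⟨w, by rwa [Subgroup.mem_comap, hw], fun h => hne (by rw [← hw, h, map_one])⟩
  have : (N.comap (ofSubtype : Perm s →* Perm α)).Normal := normal_comap_ofSubtype hN s
  have hA := alternatingGroup_le_of_normal h5 (N := N.comap ofSubtype) ‹_›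
  obtain ⟨u', rfl⟩ := exists_ofSubtype_eq (u := u) (s := s) fun y hy => hTs (by simp [T, hy])
  obtain ⟨v', rfl⟩ := exists_ofSubtype_eq (u := v) (s := s) fun y hy => hTs (by simp [T, hy])
  rw [← map_commutatorElement]
  refine hA ?_
  rw [← alternatingGroup.commutator_perm_eq h5]
  exact Subgroup.commutator_mem_commutator (Subgroup.mem_top _) (Subgroup.mem_top _)

theorem not_isSolvable_of_forall_finite_mem [Infinite α] {H : Subgroup (Perm α)}
    (hH : ∀ g : Perm α, {x | g x ≠ x}.Finite → g ∈ H) : ¬Group.IsSolvable H := by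
  obtain ⟨s, hs⟩ := Infinite.exists_subset_card_eq α 5
  let f : Perm s →* H := (ofSubtype : Perm s →* Perm α).codRestrict H
    fun σ => hH _ (finite_setOf_ofSubtype_apply_ne s σ)
  have hf : Function.Injective f := fun σ τ h => ofSubtype_injective (Subtype.ext_iff.mp h)
  exact fun _ => not_isSolvable s (by simp [hs]) (Group.isSolvable_of_isSolvable_injective hf)

end Equiv.Perm

theorem MonoidHom.injective_of_surjective_of_derivedSeries_le {G : Type*} [Group G]
    (hG : ¬Group.IsSolvable G) (k : ℕ)
    (hk : ∀ N : Subgroup G, N.Normal → N ≠ ⊥ → derivedSeries G k ≤ N)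
    {φ : G →* G} (hφ : Function.Surjective φ) : Function.Injective φ := by
  rw [← φ.ker_eq_bot_iff]
  by_contra hker
  refine hG ⟨k, ?_⟩
  rw [← map_derivedSeries_eq hφ, Subgroup.map_eq_bot_iff]
  exact hk _ φ.normal_ker hker

namespace HasTranslationVector

variable {n : ℕ} {a b : Perm (XH n)} {ma mb : Fin n → ℤ}

theorem mul (ha : HasTranslationVector a ma) (hb : HasTranslationVector b mb) :
    HasTranslationVector (a * b) (ma + mb) := by
  classical
  obtain ⟨Ka, hKa⟩ := ha
  obtain ⟨Kb, hKb⟩ := hb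
  refine ⟨Kb ∪ Ka.image b.symm, fun x hx => ?_⟩
  simp only [Finset.mem_union, Finset.mem_image, not_or, not_exists, not_and] at hx
  have hbx : b x ∉ Ka := fun h => hx.2 _ h (b.symm_apply_apply x)
  obtain ⟨hb1, hb2⟩ := hKb x hx.1
  obtain ⟨ha1, ha2⟩ := hKa (b x) hbx
  refine ⟨ha1.trans hb1, ?_⟩
  simp only [Perm.mul_apply, ha2, hb2, hb1, Pi.add_apply]
  ring

theorem inv (ha : HasTranslationVector a ma) : HasTranslationVector a⁻¹ (-ma) := by
  classical
  obtain ⟨K, hK⟩ := ha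
  refine ⟨K.image a, fun x hx => ?_⟩
  have hy : a⁻¹ x ∉ K := fun h => hx (Finset.mem_image.mpr ⟨_, h, a.apply_symm_apply x⟩)
  obtain ⟨h1, h2⟩ := hK _ hy
  rw [show a (a⁻¹ x) = x from a.apply_symm_apply x] at h1 h2
  refine ⟨h1.symm, ?_⟩
  rw [← h1] at h2
  rw [Pi.neg_apply]
  omega

theorem commutatorElement (ha : HasTranslationVector a ma) (hb : HasTranslationVector b mb) :
    HasTranslationVector ⁅a, b⁆ 0 := by
  simpa [commutatorElement_def] using ((ha.mul hb).mul ha.inv).mul hb.inv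

theorem finite_setOf_apply_ne (h : HasTranslationVector a 0) : {x | a x ≠ x}.Finite := by
  obtain ⟨K, hK⟩ := h
  refine K.finite_toSet.subset fun x hx => ?_
  by_contra hxK
  obtain ⟨h1, h2⟩ := hK x hxK
  exact hx (Prod.ext h1 (by simpa using h2))

end HasTranslationVector

section Houghton

variable {n : ℕ}

theorem FSymSub_le_Houghton : FSymSub n ≤ Houghton n := fun g (hg : {x | g x ≠ x}.Finite) => by
  refine ⟨0, hg.toFinset, fun x hx => ?_⟩
  have hgx : g x = x := by simpa using hx
  simp [hgx]

theorem commutatorElement_mem_FSymSub {a b : Perm (XH n)} (ha : a ∈ Houghton n)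
    (hb : b ∈ Houghton n) : ⁅a, b⁆ ∈ FSymSub n :=
  let ⟨_, hma⟩ := ha
  let ⟨_, hmb⟩ := hb
  (hma.commutatorElement hmb).finite_setOf_apply_ne

theorem commutator_le_FSymIn : commutator (Houghton n) ≤ FSymIn n :=
  Subgroup.commutator_le.mpr fun a _ b _ => by
    show (Houghton n).subtype ⁅a, b⁆ ∈ FSymSub n
    rw [map_commutatorElement]
    exact commutatorElement_mem_FSymSub a.2 b.2

theorem derivedSeries_two_le_of_ne_bot [NeZero n] (N : Subgroup (Houghton n)) [N.Normal]
    (hN : N ≠ ⊥) : derivedSeries (Houghton n) 2 ≤ N := by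
  let M := N.map (Houghton n).subtype
  have hM : ∀ a b, swap a b ∈ Subgroup.normalizer M := fun a b =>
    Subgroup.le_normalizer_map (H := N) _
      ⟨⟨_, swap_mem_houghton a b⟩, by simp [Subgroup.normalizer_eq_top], rfl⟩
  have hM1 : M ≠ ⊥ := by
    simpa [M, Subgroup.map_eq_bot_iff_of_injective _ (Houghton n).subtype_injective] using hN
  rw [derivedSeries_succ, derivedSeries_one, Subgroup.commutator_le]
  intro p hp q hq
  rw [← Subgroup.mem_map_iff_mem (Houghton n).subtype_injective, map_commutatorElement]
  exact commutatorElement_mem_of_finite hM hM1 (commutator_le_FSymIn hp) (commutator_le_FSymIn hq)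

end Houghton

/-- For every `n ≥ 1`, Houghton's group `H_n` is Hopfian: every
surjective endomorphism is injective. -/
theorem houghton_hopfian (n : ℕ) (hn : 1 ≤ n)
    (φ : Houghton n →* Houghton n) (hs : Function.Surjective φ) :
    Function.Injective φ :=
  have : NeZero n := ⟨by omega⟩
  φ.injective_of_surjective_of_derivedSeries_le
    (not_isSolvable_of_forall_finite_mem fun _ hg => FSymSub_le_Houghton hg) 2
    (fun N _ hN => derivedSeries_two_le_of_ne_bot N hN) hs
end

section
/- For every n ≥ 1, the center of Houghton's group H_n is trivial. -/
namespace Equiv.Perm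

variable {α : Type*} [DecidableEq α]

theorem apply_eq_self_of_commute_swap {p : Perm α} {x y : α} (hyx : y ≠ x) (hyp : y ≠ p x)
    (h : Commute (swap x y) p) : p x = x := by
  by_contra hpx
  have hpy : p y = p x :=
    calc p y = p (swap x y x) := by rw [swap_apply_left]
      _ = swap x y (p x) := (DFunLike.congr_fun h.eq x).symm
      _ = p x := swap_apply_of_ne_of_ne hpx hyp.symm
  exact hyx (p.injective hpy)

theorem eq_one_of_forall_commute_swap [Infinite α] {p : Perm α}
    (h : ∀ x y : α, Commute (swap x y) p) : p = 1 := by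
  ext x
  obtain ⟨y, hy⟩ := Infinite.exists_notMem_finset ({x, p x} : Finset α)
  simp only [Finset.mem_insert, Finset.mem_singleton, not_or] at hy
  exact apply_eq_self_of_commute_swap hy.1 hy.2 (h x y)

end Equiv.Perm

theorem Subgroup.center_eq_bot_of_forall_swap_mem {α : Type*} [DecidableEq α] [Infinite α]
    {G : Subgroup (Equiv.Perm α)} (hG : ∀ x y : α, Equiv.swap x y ∈ G) : center G = ⊥ := by
  refine (eq_bot_iff_forall _).2 fun g hg => Subtype.ext ?_
  exact Equiv.Perm.eq_one_of_forall_commute_swap fun x y =>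
    congrArg Subtype.val (mem_center_iff.1 hg ⟨_, hG x y⟩)

theorem houghton_center_eq_bot_general (n : ℕ) :
    Subgroup.center (Houghton n) = ⊥ := by
  rcases n.eq_zero_or_pos with rfl | hn
  · exact Subsingleton.elim _ _
  · have : Nonempty (Fin n) := ⟨⟨0, hn⟩⟩
    exact Subgroup.center_eq_bot_of_forall_swap_mem swap_mem_houghton

/-- For every `n ≥ 1`, the center of Houghton's group `H_n` is
trivial. -/
theorem houghton_center_eq_bot (n : ℕ) (hn : 1 ≤ n) :
    Subgroup.center (Houghton n) = ⊥ :=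
  houghton_center_eq_bot_general n
end

section
/- Let n ≥ 2 and let φ : H_n → H_n be an injective group homomorphism. Then there exist a positive integer ℓ and an injective map δ : {1,…,n} → {1,…,n} such that for every i ∈ {2,…,n}, π(φ(g_i)) = ℓ·e_{δ(i)} − ℓ·e_{δ(1)}; that is, each φ(g_i) acts (off a finite set) as translation by −ℓ on the common source ray R_{δ(1)}, as translation by +ℓ on its target ray R_{δ(i)}, and as the identity translation on every other ray. In particular all φ(g_i) have the same unique source ray and pairwise distinct target rays. -/
/-! Write `a_i = φ(g_i)` and `c = φ(α)`, where `α` swaps the two lowest points of `R_1`. Being an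
involution, `c` has translation vector `0`, so its support `F` is finite. The conjugates
`g_i^{-p} α g_i^p` do not depend on `i`, so neither do the supports `a_i^{-p} F` of their images.
These sets escape to infinity, since otherwise a power of `a_i` would fix `F` pointwise and commute
with `c`, contradicting injectivity. Following the highest point on a ray `R_{δ(1)}` along which
they escape shows that every `a_i` translates `R_{δ(1)}` by one and the same `-ℓ < 0`. Dually,
`a_i^s F` escapes along a ray `R_{δ(i)}` that `a_i` translates upwards, and since
`g_i^s α g_i^{-s}` commutes with `g_j` for `j ≠ i` and `s ≥ 2`, no `a_j` translates `R_{δ(i)}`.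
Finally, translation vectors sum to zero, which fixes the entry of `a_i` at `R_{δ(i)}` to `ℓ`. -/

open Finset

section

variable {n : ℕ}

theorem Equiv.Perm.commute_swap_of_apply_eq {α : Type*} [DecidableEq α] {f : Equiv.Perm α}
    {x y : α} (hx : f x = x) (hy : f y = y) : Commute f (Equiv.swap x y) :=
  mul_inv_eq_iff_eq_mul.1 (by rw [← Equiv.swap_apply_apply, hx, hy])

theorem Equiv.Perm.exists_pos_pow_apply_eq_self_of_forall_mem {α : Type*} (σ : Equiv.Perm α)
    (F : Finset α) {B : Set α} (hB : B.Finite) (h : ∀ p : ℕ, ∀ x ∈ F, (σ ^ p) x ∈ B) :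
    ∃ N, 0 < N ∧ ∀ x ∈ F, (σ ^ N) x = x := by
  have := hB.to_subtype
  obtain ⟨p, q, hne, hpq⟩ := Finite.exists_ne_map_eq_of_infinite
    fun p : ℕ => fun x : F => (⟨(σ ^ p) x, h p x x.2⟩ : B)
  wlog hlt : p < q generalizing p q
  · exact this q p hne.symm hpq.symm (by omega)
  refine ⟨q - p, by omega, fun x hx => (σ ^ p).injective ?_⟩
  rw [← Equiv.Perm.mul_apply, ← pow_add, Nat.add_sub_cancel' hlt.le]
  exact (congrArg Subtype.val (congrFun hpq ⟨x, hx⟩)).symm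

theorem Finset.image_pow_succ {α : Type*} [DecidableEq α] (σ : Equiv.Perm α) (F : Finset α)
    (p : ℕ) : F.image ⇑(σ ^ (p + 1)) = (F.image ⇑(σ ^ p)).image σ := by
  rw [Finset.image_image, pow_succ']
  rfl

theorem Finset.mem_image_iff_conj_apply_ne {α : Type*} [DecidableEq α] {c : Equiv.Perm α}
    {F : Finset α} (hF : ∀ x, x ∈ F ↔ c x ≠ x) (σ : Equiv.Perm α) (y : α) :
    y ∈ F.image σ ↔ (σ * c * σ⁻¹) y ≠ y := by
  rw [Equiv.Perm.mul_apply, Equiv.Perm.mul_apply, Ne, ← Equiv.Perm.eq_inv_iff_eq, ← ne_eq, ← hF,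
    Finset.mem_image]
  exact ⟨fun ⟨x, hx, hxy⟩ => hxy ▸ by simpa using hx, fun h => ⟨_, h, by simp⟩⟩

def TranslatesAbove (u : Equiv.Perm (XH n)) (m : Fin n → ℤ) (b : ℕ) : Prop :=
  ∀ x : XH n, b < x.2 → (u x).1 = x.1 ∧ ((u x).2 : ℤ) = x.2 + m x.1

theorem TranslatesAbove.apply_eq_self {u : Equiv.Perm (XH n)} {b : ℕ}
    (h : TranslatesAbove u 0 b) {x : XH n} (hx : b < x.2) : u x = x := by
  obtain ⟨h1, h2⟩ := h x hx
  exact Prod.ext h1 (by simpa using h2)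

theorem TranslatesAbove.pow_apply_fst_eq_and_le_snd {v : Equiv.Perm (XH n)} {m : Fin n → ℤ}
    {b : ℕ} (h : TranslatesAbove v m b) {t : Fin n} (ht : 0 < m t) {q : ℕ} (hq : b < q) (k : ℕ) :
    ((v ^ k) (t, q)).1 = t ∧ q + k ≤ ((v ^ k) (t, q)).2 := by
  induction k with
  | zero => simp
  | succ k ih =>
    rw [pow_succ', Equiv.Perm.mul_apply]
    obtain ⟨h1, h2⟩ := h _ (show b < ((v ^ k) (t, q)).2 by omega)
    rw [ih.1] at h1 h2
    exact ⟨h1, by omega⟩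

theorem TranslatesAbove.eq_zero_of_mul_self {u : Equiv.Perm (XH n)} {m : Fin n → ℤ} {b : ℕ}
    (h : TranslatesAbove u m b) (hu : u * u = 1) : m = 0 := by
  funext j
  obtain ⟨h1, h2⟩ := h (j, b + (m j).natAbs + 1) (by simp)
  simp only at h2
  obtain ⟨-, h4⟩ := h (u (j, b + (m j).natAbs + 1)) (by omega)
  rw [← Equiv.Perm.mul_apply, hu, Equiv.Perm.one_apply, h1] at h4
  simp only [Pi.zero_apply] at h4 ⊢
  omega

theorem finite_setOf_snd_le (H : ℕ) : {x : XH n | x.2 ≤ H}.Finite :=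
  (Set.finite_univ.prod (Set.finite_Iic H)).subset fun _ hx => ⟨trivial, hx⟩

/-- `0` when `S` has no point on `R_j`. -/
def rayTop (S : Finset (XH n)) (j : Fin n) : ℕ :=
  {x ∈ S | x.1 = j}.sup Prod.snd

theorem le_rayTop {S : Finset (XH n)} {j : Fin n} {q : ℕ} (h : (j, q) ∈ S) : q ≤ rayTop S j :=
  le_sup (f := Prod.snd) (mem_filter.2 ⟨h, rfl⟩ : (j, q) ∈ {x ∈ S | x.1 = j})

theorem rayTop_le {S : Finset (XH n)} {j : Fin n} {H : ℕ} (h : ∀ q, (j, q) ∈ S → q ≤ H) :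
    rayTop S j ≤ H :=
  Finset.sup_le fun x hx => by
    obtain ⟨hxS, rfl⟩ := mem_filter.1 hx
    exact h x.2 hxS

theorem exists_mem_of_lt_rayTop {S : Finset (XH n)} {j : Fin n} {H : ℕ} (h : H < rayTop S j) :
    ∃ q, H < q ∧ (j, q) ∈ S := by
  obtain ⟨x, hx, hHx⟩ := Finset.lt_sup_iff.1 h
  obtain ⟨hxS, rfl⟩ := mem_filter.1 hx
  exact ⟨x.2, hHx, hxS⟩

theorem rayTop_mem {S : Finset (XH n)} {j : Fin n} (h : 0 < rayTop S j) : (j, rayTop S j) ∈ S := by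
  obtain ⟨q, hq, hqS⟩ := exists_mem_of_lt_rayTop (show rayTop S j - 1 < rayTop S j by omega)
  rwa [le_antisymm (le_rayTop hqS) (by omega)] at hqS

namespace HasTranslationVector

variable {u v : Equiv.Perm (XH n)} {m m' : Fin n → ℤ}

theorem exists_translatesAbove (h : HasTranslationVector u m) : ∃ b, TranslatesAbove u m b := by
  obtain ⟨K, hK⟩ := h
  refine ⟨K.sup Prod.snd, fun x hx => hK x fun hxK => ?_⟩
  exact absurd (le_sup (f := Prod.snd) hxK) (by omega)

theorem inv_s8 (h : HasTranslationVector u m) : HasTranslationVector u⁻¹ (-m) := by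
  obtain ⟨K, hK⟩ := h
  refine ⟨K.image u, fun x hx => ?_⟩
  have hx' : u⁻¹ x ∉ K := fun hc => hx (mem_image.2 ⟨_, hc, u.apply_symm_apply x⟩)
  obtain ⟨h1, h2⟩ := hK _ hx'
  rw [show u (u⁻¹ x) = x from u.apply_symm_apply x] at h1 h2
  rw [← h1] at h2 ⊢
  exact ⟨rfl, by rw [Pi.neg_apply]; omega⟩

theorem eq_zero_of_mul_self (h : HasTranslationVector u m) (hu : u * u = 1) : m = 0 :=
  let ⟨_, hb⟩ := h.exists_translatesAbove
  hb.eq_zero_of_mul_self hu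

theorem exists_finset_iff_apply_ne (h : HasTranslationVector u 0) :
    ∃ F : Finset (XH n), ∀ x, x ∈ F ↔ u x ≠ x := by
  obtain ⟨K, hK⟩ := h
  refine ⟨K.filter fun x => u x ≠ x, fun x => ⟨fun hx => (mem_filter.1 hx).2, fun hx => ?_⟩⟩
  refine mem_filter.2 ⟨?_, hx⟩
  by_contra hxK
  obtain ⟨h1, h2⟩ := hK x hxK
  exact hx (Prod.ext h1 (by simpa using h2))

/-- The image of the points of height at most `b` is the set of points of height at most
`b + m j` on each ray `j`; comparing cardinalities gives `∑ j, m j = 0`. -/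
theorem sum_eq_zero (h : HasTranslationVector u m) : ∑ j, m j = 0 := by
  obtain ⟨b, hb⟩ := h.exists_translatesAbove
  set low : Finset (XH n) := univ ×ˢ range (b + 1)
  have hfiber : ∀ j, {y ∈ low.image u | y.1 = j} = {j} ×ˢ range (b + 1 + m j).toNat := by
    intro j
    ext ⟨j', r⟩
    simp only [mem_filter, mem_image, mem_product, mem_singleton, mem_range, mem_univ,
      true_and, low]
    constructor
    · rintro ⟨⟨x, hx, hux⟩, rfl⟩
      refine ⟨rfl, ?_⟩
      by_contra hr
      obtain ⟨h1, h2⟩ := hb (j', (r - m j').toNat) (by simp only; omega)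
      have hy : u (j', (r - m j').toNat) = (j', r) := Prod.ext h1 (by simp only at h2 ⊢; omega)
      rw [u.injective (hux.trans hy.symm)] at hx
      simp only at hx
      omega
    · rintro ⟨rfl, hr⟩
      refine ⟨⟨u⁻¹ (j', r), ?_, u.apply_symm_apply _⟩, rfl⟩
      by_contra hlow
      obtain ⟨h1, h2⟩ := hb (u⁻¹ (j', r)) (by omega)
      rw [show u (u⁻¹ (j', r)) = (j', r) from u.apply_symm_apply _] at h1 h2
      rw [← h1] at h2
      simp only at h2
      omega
  have hnonneg : ∀ j, 0 ≤ (b : ℤ) + 1 + m j := fun j => by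
    have := (hb (j, b + 1) (by simp)).2
    simp only at this
    omega
  have hcard := card_image_of_injective low u.injective
  rw [card_eq_sum_card_fiberwise (f := Prod.fst) (t := univ) (fun _ _ => mem_coe.2 (mem_univ _))]
    at hcard
  simp only [hfiber, card_product, card_singleton, card_range, one_mul, low, card_univ,
    Fintype.card_fin] at hcard
  have hcast : ∑ j, ((b : ℤ) + 1 + m j) = ∑ _j : Fin n, ((b : ℤ) + 1) := by
    have := congrArg (Nat.cast : ℕ → ℤ) hcard
    push_cast [sum_const, card_univ, Fintype.card_fin, nsmul_eq_mul] at this ⊢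
    rw [← this]
    exact sum_congr rfl fun j _ => (Int.toNat_of_nonneg (hnonneg j)).symm
  rw [sum_add_distrib] at hcast
  linarith

theorem exists_rayTop_image_le (h : HasTranslationVector u m) :
    ∃ B : ℕ, ∀ S j, (rayTop (S.image u) j : ℤ) ≤ max (B : ℤ) (rayTop S j + m j) := by
  obtain ⟨b, hb⟩ := h.exists_translatesAbove
  set low : Finset (XH n) := univ ×ˢ range (b + 1)
  refine ⟨(low.image u).sup Prod.snd, fun S j => ?_⟩
  have key : ∀ q, (j, q) ∈ S.image u →
      (q : ℤ) ≤ max (((low.image u).sup Prod.snd : ℕ) : ℤ) (rayTop S j + m j) := by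
    intro q hq
    obtain ⟨x, hxS, hux⟩ := mem_image.1 hq
    by_cases hxb : x.2 ≤ b
    · have hlow : u x ∈ low.image u :=
        mem_image_of_mem u (mem_product.2 ⟨mem_univ _, mem_range.2 (by omega)⟩)
      have := le_sup (f := Prod.snd) hlow
      rw [hux] at this
      omega
    · obtain ⟨h1, h2⟩ := hb x (by omega)
      rw [hux] at h1 h2
      simp only at h1 h2
      subst h1
      have := le_rayTop (show (x.1, x.2) ∈ S from hxS)
      omega
  have := rayTop_le (H := (max (((low.image u).sup Prod.snd : ℕ) : ℤ) (rayTop S j + m j)).toNat)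
    fun q hq => by
      have := key q hq
      omega
  omega

theorem exists_rayTop_image_eq (h : HasTranslationVector u m) (j : Fin n) :
    ∃ C : ℕ, ∀ S, C < rayTop S j → (rayTop (S.image u) j : ℤ) = rayTop S j + m j := by
  obtain ⟨B, hB⟩ := h.exists_rayTop_image_le
  obtain ⟨b, hb⟩ := h.exists_translatesAbove
  refine ⟨b + B + (m j).natAbs, fun S hS => le_antisymm ?_ ?_⟩
  · have := hB S j
    omega
  · obtain ⟨h1, h2⟩ := hb (j, rayTop S j) (by simp only; omega)
    have hmem := mem_image_of_mem u (rayTop_mem (show 0 < rayTop S j by omega))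
    rw [show u (j, rayTop S j) = (j, (u (j, rayTop S j)).2) from Prod.ext h1 rfl] at hmem
    have := le_rayTop hmem
    simp only at h2
    omega

theorem pos_of_forall_lt_rayTop (h : HasTranslationVector u m) {S : ℕ → Finset (XH n)}
    (hS : ∀ p, S (p + 1) = (S p).image u) {j : Fin n} (hj : ∀ H, ∃ p, H < rayTop (S p) j) :
    0 < m j := by
  obtain ⟨B, hB⟩ := h.exists_rayTop_image_le
  by_contra hm
  have hbound : ∀ p, rayTop (S p) j ≤ max B (rayTop (S 0) j) := by
    intro p
    induction p with
    | zero => exact le_max_right _ _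
    | succ p ih =>
      have := hB (S p) j
      rw [← hS] at this
      omega
  obtain ⟨p, hp⟩ := hj (max B (rayTop (S 0) j))
  exact absurd (hbound p) (by omega)

theorem apply_eq_of_forall_image_eq (hu : HasTranslationVector u m) (hv : HasTranslationVector v m')
    {j : Fin n} (h : ∀ H, ∃ S : Finset (XH n), H < rayTop S j ∧ S.image u = S.image v) :
    m j = m' j := by
  obtain ⟨C, hC⟩ := hu.exists_rayTop_image_eq j
  obtain ⟨C', hC'⟩ := hv.exists_rayTop_image_eq j
  obtain ⟨S, hS, huv⟩ := h (max C C')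
  have h1 := hC S (by omega)
  have h2 := hC' S (by omega)
  rw [huv] at h1
  omega

/-- Otherwise `e` would move every point of the `v`-orbit of `(t, q)`, which climbs above the
support of `e`. -/
theorem apply_eq_self_of_commute (hv : HasTranslationVector v m) {t : Fin n} (ht : m t ≠ 0) :
    ∃ b, ∀ e : Equiv.Perm (XH n), HasTranslationVector e 0 → Commute v e →
      ∀ q, b < q → e (t, q) = (t, q) := by
  wlog hpos : 0 < m t generalizing v m
  · obtain ⟨b, hb⟩ := this hv.inv_s8 (by simpa using ht) (by simp only [Pi.neg_apply]; omega)
    exact ⟨b, fun e he hve => hb e he hve.inv_left⟩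
  obtain ⟨b, hb⟩ := hv.exists_translatesAbove
  refine ⟨b, fun e he hve q hq => ?_⟩
  obtain ⟨b', hb'⟩ := he.exists_translatesAbove
  have hfix : e ((v ^ (b' + 1)) (t, q)) = (v ^ (b' + 1)) (t, q) :=
    hb'.apply_eq_self (by have := (hb.pow_apply_fst_eq_and_le_snd hpos hq (b' + 1)).2; omega)
  apply (v ^ (b' + 1)).injective
  rw [← Equiv.Perm.mul_apply, (hve.pow_left _).eq, Equiv.Perm.mul_apply, hfix]

end HasTranslationVector

/-- If the tops were bounded on every ray, the sets would stay in a finite box and two powers of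
`σ` would agree on `F`. -/
theorem exists_forall_lt_rayTop (σ : Equiv.Perm (XH n)) (F : Finset (XH n))
    (hF : ∀ N, 0 < N → ∃ x ∈ F, (σ ^ N) x ≠ x) (p₀ : ℕ) :
    ∃ j, ∀ H, ∃ p, H < rayTop (F.image ⇑(σ ^ (p₀ + p))) j := by
  by_contra! hbdd
  choose H hH using hbdd
  obtain ⟨N, hN, hfix⟩ := σ.exists_pos_pow_apply_eq_self_of_forall_mem (F.image ⇑(σ ^ p₀))
    (finite_setOf_snd_le (univ.sup H)) fun p y hy => by
      obtain ⟨x, hx, rfl⟩ := mem_image.1 hy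
      have hmem : (((σ ^ p) ((σ ^ p₀) x)).1, ((σ ^ p) ((σ ^ p₀) x)).2) ∈
          F.image ⇑(σ ^ (p₀ + p)) := by
        rw [← Equiv.Perm.mul_apply, ← pow_add, add_comm]
        exact mem_image_of_mem _ hx
      exact (le_rayTop hmem).trans ((hH _ p).trans (le_sup (f := H) (mem_univ _)))
  obtain ⟨x, hx, hne⟩ := hF N hN
  apply hne
  apply (σ ^ p₀).injective
  rw [← Equiv.Perm.mul_apply, ← pow_add, add_comm, pow_add, Equiv.Perm.mul_apply,
    hfix _ (mem_image_of_mem _ hx)]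

theorem hasTranslationVector_zero_of_mul_self {u : Equiv.Perm (XH n)} (hu : u ∈ Houghton n)
    (h : u * u = 1) : HasTranslationVector u 0 := by
  obtain ⟨m, hm⟩ := hu
  rwa [hm.eq_zero_of_mul_self h] at hm

section Generators

variable (h0 : 0 < n) {i : Fin n} (hi : i ≠ ray0 n h0)

theorem gGen_apply_ray0_zero : gGen n h0 i hi (ray0 n h0, 0) = (i, 0) := by
  simp [gGen, gFun]

theorem gGen_apply_ray0_succ (q : ℕ) : gGen n h0 i hi (ray0 n h0, q + 1) = (ray0 n h0, q) := by
  simp [gGen, gFun]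

theorem gGen_apply_self (q : ℕ) : gGen n h0 i hi (i, q) = (i, q + 1) := by
  simp [gGen, gFun, hi]

theorem gGen_apply_of_ne {j : Fin n} (hj : j ≠ ray0 n h0) (hji : j ≠ i) (q : ℕ) :
    gGen n h0 i hi (j, q) = (j, q) := by
  simp [gGen, gFun, hj, hji]

theorem gGen_inv_apply_ray0 (q : ℕ) :
    (gGen n h0 i hi)⁻¹ (ray0 n h0, q) = (ray0 n h0, q + 1) := by
  simp [gGen, gInvFun, Ne.symm hi]

theorem gGen_pow_apply_ray0 (N q : ℕ) : (gGen n h0 i hi ^ N) (ray0 n h0, q) =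
    if N ≤ q then (ray0 n h0, q - N) else (i, N - q - 1) := by
  induction N with
  | zero => simp
  | succ N ih =>
    rw [pow_succ', Equiv.Perm.mul_apply, ih]
    by_cases h1 : N + 1 ≤ q
    · rw [if_pos (by omega), if_pos h1, show q - N = q - (N + 1) + 1 by omega,
        gGen_apply_ray0_succ]
    · rw [if_neg h1]
      by_cases h2 : N ≤ q
      · rw [if_pos h2, show q - N = 0 by omega, gGen_apply_ray0_zero,
          show N + 1 - q - 1 = 0 by omega]
      · rw [if_neg h2, gGen_apply_self, show N + 1 - q - 1 = N - q - 1 + 1 by omega]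

theorem gGen_inv_pow_apply_ray0 (p q : ℕ) :
    ((gGen n h0 i hi)⁻¹ ^ p) (ray0 n h0, q) = (ray0 n h0, q + p) := by
  induction p with
  | zero => simp
  | succ p ih => rw [pow_succ', Equiv.Perm.mul_apply, ih, gGen_inv_apply_ray0, add_assoc]

theorem gGen_inv_pow_conj_alphaPerm (p : ℕ) :
    (gGen n h0 i hi)⁻¹ ^ p * alphaPerm n h0 * ((gGen n h0 i hi)⁻¹ ^ p)⁻¹ =
      Equiv.swap (ray0 n h0, p) (ray0 n h0, p + 1) := by
  rw [alphaPerm, ← Equiv.swap_apply_apply, gGen_inv_pow_apply_ray0, gGen_inv_pow_apply_ray0,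
    zero_add, add_comm 1]

theorem gGen_pow_mul_alphaPerm_ne {N : ℕ} (hN : 0 < N) :
    gGen n h0 i hi ^ N * alphaPerm n h0 ≠ alphaPerm n h0 * gGen n h0 i hi ^ N := by
  intro h
  have h00 := congrArg (· (ray0 n h0, 0)) h
  simp only [Equiv.Perm.mul_apply, alphaPerm, Equiv.swap_apply_left, gGen_pow_apply_ray0,
    if_neg (show ¬ N ≤ 0 by omega)] at h00
  rw [Equiv.swap_apply_of_ne_of_ne (by simp [hi]) (by simp [hi])] at h00
  split_ifs at h00 with h1
  · exact hi (Prod.ext_iff.1 h00).1.symm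
  · simp only [Prod.mk.injEq, true_and] at h00
    omega

theorem commute_gGen_conj_alphaPerm {j : Fin n} (hj : j ≠ ray0 n h0) (hji : j ≠ i) {s : ℕ}
    (hs : 2 ≤ s) :
    Commute (gGen n h0 j hj) (gGen n h0 i hi ^ s * alphaPerm n h0 * (gGen n h0 i hi ^ s)⁻¹) := by
  rw [alphaPerm, ← Equiv.swap_apply_apply, gGen_pow_apply_ray0, gGen_pow_apply_ray0,
    if_neg (by omega), if_neg (by omega)]
  exact Equiv.Perm.commute_swap_of_apply_eq (gGen_apply_of_ne h0 hj hi (Ne.symm hji) _)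
    (gGen_apply_of_ne h0 hj hi (Ne.symm hji) _)

end Generators

section Monomorphism

variable {h0 : 0 < n} (φ : Houghton n →* Houghton n)

theorem imageGen_mem (i : Fin n) (hi : i ≠ ray0 n h0) : imageGen h0 φ i hi ∈ Houghton n :=
  (φ _).2

theorem imageAlpha_mem : imageAlpha h0 φ ∈ Houghton n :=
  (φ _).2

theorem imageAlpha_mul_self : imageAlpha h0 φ * imageAlpha h0 φ = 1 := by
  have : hAlpha n h0 * hAlpha n h0 = 1 := Subtype.ext (Equiv.swap_mul_self _ _)
  rw [imageAlpha, ← Subgroup.coe_mul, ← map_mul, this, map_one, Subgroup.coe_one]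

theorem imageGen_inv_pow_conj_imageAlpha {i i' : Fin n} (hi : i ≠ ray0 n h0)
    (hi' : i' ≠ ray0 n h0) (p : ℕ) :
    (imageGen h0 φ i hi)⁻¹ ^ p * imageAlpha h0 φ * ((imageGen h0 φ i hi)⁻¹ ^ p)⁻¹ =
      (imageGen h0 φ i' hi')⁻¹ ^ p * imageAlpha h0 φ * ((imageGen h0 φ i' hi')⁻¹ ^ p)⁻¹ := by
  have key : ∀ (i : Fin n) (hi : i ≠ ray0 n h0),
      (imageGen h0 φ i hi)⁻¹ ^ p * imageAlpha h0 φ * ((imageGen h0 φ i hi)⁻¹ ^ p)⁻¹ =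
        φ (hSwap (ray0 n h0, p) (ray0 n h0, p + 1)) := by
    intro i hi
    have : (hGen n h0 i hi)⁻¹ ^ p * hAlpha n h0 * ((hGen n h0 i hi)⁻¹ ^ p)⁻¹ =
        hSwap (ray0 n h0, p) (ray0 n h0, p + 1) :=
      Subtype.ext (gGen_inv_pow_conj_alphaPerm h0 hi p)
    rw [← this]
    simp [imageGen, imageAlpha]
  rw [key, key]

theorem imageGen_pow_mul_imageAlpha_ne (hφ : Function.Injective φ) {i : Fin n}
    (hi : i ≠ ray0 n h0) {N : ℕ} (hN : 0 < N) :
    imageGen h0 φ i hi ^ N * imageAlpha h0 φ ≠ imageAlpha h0 φ * imageGen h0 φ i hi ^ N := by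
  intro h
  apply gGen_pow_mul_alphaPerm_ne h0 hi hN
  have : hGen n h0 i hi ^ N * hAlpha n h0 = hAlpha n h0 * hGen n h0 i hi ^ N :=
    hφ (Subtype.ext (by simpa [imageGen, imageAlpha] using h))
  simpa [hGen, hAlpha] using congrArg Subtype.val this

theorem commute_imageGen_conj_imageAlpha {i j : Fin n} (hi : i ≠ ray0 n h0) (hj : j ≠ ray0 n h0)
    (hji : j ≠ i) {s : ℕ} (hs : 2 ≤ s) :
    Commute (imageGen h0 φ j hj)
      (imageGen h0 φ i hi ^ s * imageAlpha h0 φ * (imageGen h0 φ i hi ^ s)⁻¹) := by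
  have : Commute (hGen n h0 j hj) (hGen n h0 i hi ^ s * hAlpha n h0 * (hGen n h0 i hi ^ s)⁻¹) :=
    Subtype.ext (commute_gGen_conj_alphaPerm h0 hi hj hji hs).eq
  simpa [imageGen, imageAlpha] using (this.map φ).map (Houghton n).subtype

theorem hasTranslationVector_conj_imageAlpha {i : Fin n} (hi : i ≠ ray0 n h0) (s : ℕ) :
    HasTranslationVector
      (imageGen h0 φ i hi ^ s * imageAlpha h0 φ * (imageGen h0 φ i hi ^ s)⁻¹) 0 := by
  refine hasTranslationVector_zero_of_mul_self ?_ ?_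
  · have := imageGen_mem φ i hi
    exact mul_mem (mul_mem (pow_mem this s) (imageAlpha_mem φ)) (inv_mem (pow_mem this s))
  · rw [conj_mul, imageAlpha_mul_self, mul_one, mul_inv_cancel]

theorem exists_mem_pow_imageGen_apply_ne (hφ : Function.Injective φ) {F : Finset (XH n)}
    (hF : ∀ x, x ∈ F ↔ imageAlpha h0 φ x ≠ x) {i : Fin n} (hi : i ≠ ray0 n h0) {N : ℕ}
    (hN : 0 < N) : ∃ x ∈ F, (imageGen h0 φ i hi ^ N) x ≠ x := by
  by_contra! h
  refine imageGen_pow_mul_imageAlpha_ne φ hφ hi hN (Equiv.Perm.Disjoint.commute fun x => ?_)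
  by_cases hx : imageAlpha h0 φ x = x
  · exact Or.inr hx
  · exact Or.inl (h x ((hF x).2 hx))

theorem image_imageGen_inv_pow_eq {F : Finset (XH n)} (hF : ∀ x, x ∈ F ↔ imageAlpha h0 φ x ≠ x)
    {i i' : Fin n} (hi : i ≠ ray0 n h0) (hi' : i' ≠ ray0 n h0) (p : ℕ) :
    F.image ⇑((imageGen h0 φ i hi)⁻¹ ^ p) = F.image ⇑((imageGen h0 φ i' hi')⁻¹ ^ p) := by
  ext y
  rw [mem_image_iff_conj_apply_ne hF, mem_image_iff_conj_apply_ne hF,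
    imageGen_inv_pow_conj_imageAlpha]

/-- The sets `φ(g_i)^{-p} F`, supports of `φ(g_i^{-p} α g_i^p)`, do not depend on `i`, so on a
ray along which they escape their tops move at the same speed under every `φ(g_i)⁻¹`. -/
theorem exists_source_ray (hφ : Function.Injective φ) {F : Finset (XH n)}
    (hF : ∀ x, x ∈ F ↔ imageAlpha h0 φ x ≠ x) (hn : 2 ≤ n) :
    ∃ (j₀ : Fin n) (ℓ : ℕ), 1 ≤ ℓ ∧ ∀ (i : Fin n) (hi : i ≠ ray0 n h0) (m : Fin n → ℤ),
      HasTranslationVector (imageGen h0 φ i hi) m → m j₀ = -ℓ := by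
  set i₁ : Fin n := ⟨1, by omega⟩
  have hi₁ : i₁ ≠ ray0 n h0 := by simp [i₁, ray0, Fin.ext_iff]
  set σ := (imageGen h0 φ i₁ hi₁)⁻¹
  have hσ : ∀ N, 0 < N → ∃ x ∈ F, (σ ^ N) x ≠ x := fun N hN => by
    obtain ⟨x, hx, hne⟩ := exists_mem_pow_imageGen_apply_ne φ hφ hF hi₁ hN
    refine ⟨x, hx, fun h => hne ?_⟩
    rw [inv_pow, Equiv.Perm.inv_eq_iff_eq] at h
    exact h.symm
  obtain ⟨j₀, hj₀⟩ := exists_forall_lt_rayTop σ F hσ 0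
  obtain ⟨m₁, hm₁⟩ := imageGen_mem φ i₁ hi₁
  have hpos := hm₁.inv_s8.pos_of_forall_lt_rayTop (fun p => F.image_pow_succ σ (0 + p)) hj₀
  rw [Pi.neg_apply] at hpos
  refine ⟨j₀, (-m₁ j₀).toNat, by omega, fun i hi m hm => ?_⟩
  have hS := image_imageGen_inv_pow_eq φ hF hi hi₁
  have := hm.inv_s8.apply_eq_of_forall_image_eq hm₁.inv_s8 fun H => by
    obtain ⟨p, hp⟩ := hj₀ H
    refine ⟨_, hp, ?_⟩
    rw [← F.image_pow_succ, ← hS, ← F.image_pow_succ, hS]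
  simp only [Pi.neg_apply] at this
  omega

/-- The sets `φ(g_i)^s F`, supports of `φ(g_i^s α g_i^{-s})`, escape along a ray `t`; for
`s ≥ 2`, `g_i^s α g_i^{-s}` commutes with every other `g_j`, so `φ(g_j)` cannot translate `t`. -/
theorem exists_target_ray (hφ : Function.Injective φ) {F : Finset (XH n)}
    (hF : ∀ x, x ∈ F ↔ imageAlpha h0 φ x ≠ x) (i : Fin n) (hi : i ≠ ray0 n h0) :
    ∃ t : Fin n, (∀ m, HasTranslationVector (imageGen h0 φ i hi) m → 0 < m t) ∧
      ∀ (j : Fin n) (hj : j ≠ ray0 n h0), j ≠ i →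
        ∀ m, HasTranslationVector (imageGen h0 φ j hj) m → m t = 0 := by
  obtain ⟨t, ht⟩ := exists_forall_lt_rayTop (imageGen h0 φ i hi) F
    (fun N hN => exists_mem_pow_imageGen_apply_ne φ hφ hF hi hN) 2
  refine ⟨t, fun m hm => hm.pos_of_forall_lt_rayTop (fun p => F.image_pow_succ _ (2 + p)) ht,
    fun j hj hji m hm => ?_⟩
  by_contra hmt
  obtain ⟨b, hb⟩ := hm.apply_eq_self_of_commute hmt
  obtain ⟨p, hp⟩ := ht b
  obtain ⟨q, hq, hmem⟩ := exists_mem_of_lt_rayTop hp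
  exact (mem_image_iff_conj_apply_ne hF _ _).1 hmem
    (hb _ (hasTranslationVector_conj_imageAlpha φ hi _)
      (commute_imageGen_conj_imageAlpha φ hi hj hji (by omega)) q hq)

end Monomorphism

theorem exists_injective_of_source_target {r₀ : Fin n} (m : ∀ i, i ≠ r₀ → Fin n → ℤ) (ℓ : ℕ)
    (j₀ : Fin n) (t : ∀ i, i ≠ r₀ → Fin n) (hsum : ∀ i hi, ∑ j, m i hi j = 0)
    (hsrc : ∀ i hi, m i hi j₀ = -ℓ) (htgt : ∀ i hi, 0 < m i hi (t i hi))
    (hother : ∀ i hi j hj, j ≠ i → m j hj (t i hi) = 0) :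
    ∃ δ : Fin n → Fin n, Function.Injective δ ∧ ∀ i hi,
      m i hi = fun j => (ℓ : ℤ) * ((if j = δ i then 1 else 0) - (if j = δ r₀ then 1 else 0)) := by
  set δ : Fin n → Fin n := fun i => if hi : i = r₀ then j₀ else t i hi
  have hdiag : ∀ i hi, 0 < m i hi (δ i) := fun i hi => by simpa [δ, hi] using htgt i hi
  have hoff : ∀ i hi r, r ≠ i → m i hi (δ r) = if r = r₀ then -(ℓ : ℤ) else 0 := by
    intro i hi r hri
    by_cases hr : r = r₀
    · simp [δ, hr, hsrc]
    · simp [δ, hr, hother r hr i hi (Ne.symm hri)]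
  have hinj : Function.Injective δ := by
    intro r r' h
    by_contra hne
    wlog hr' : r' ≠ r₀ generalizing r r'
    · exact this h.symm (Ne.symm hne) fun hr => hne (hr.trans (not_not.1 hr').symm)
    have := hoff r' hr' r hne
    rw [h, ← ite_not] at this
    have := hdiag r' hr'
    split_ifs at * <;> omega
  refine ⟨δ, hinj, fun i hi => ?_⟩
  set v : Fin n → ℤ := fun j => ℓ * ((if j = δ i then 1 else 0) - (if j = δ r₀ then 1 else 0))
  have hagree : ∀ j, j ≠ δ i → m i hi j = v j := by
    intro j hj
    obtain ⟨r, rfl⟩ := Finite.injective_iff_surjective.1 hinj j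
    have hri : r ≠ i := by rintro rfl; exact hj rfl
    rw [hoff i hi r hri]
    by_cases hr : r = r₀ <;> simp [v, hr, hinj.eq_iff, hri, hi.symm]
  have hsumv : ∑ j, v j = 0 := by simp [v, ← mul_sum, sum_sub_distrib]
  funext j
  by_cases hj : j = δ i
  · subst hj
    have h1 := add_sum_erase univ (m i hi) (mem_univ (δ i))
    have h2 := add_sum_erase univ v (mem_univ (δ i))
    rw [sum_congr rfl fun j hj => hagree j (ne_of_mem_erase hj)] at h1
    linarith [hsum i hi]
  · exact hagree j hj

end

/-- For `n ≥ 2` and any injective endomorphism `φ` of `H_n`, there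
are a positive integer `ℓ` and an injective map `δ` of the ray indices such
that `π(φ(g_i)) = ℓ·e_{δ(i)} − ℓ·e_{δ(1)}` for every `i ∈ {2, …, n}`: each
`φ(g_i)` acts off a finite set as translation by `−ℓ` on the common source ray
`R_{δ(1)}`, by `+ℓ` on its target ray `R_{δ(i)}`, and trivially elsewhere. -/
theorem monomorphism_translation_vectors
    (n : ℕ) (hn : 2 ≤ n) (h0 : 0 < n)
    (φ : Houghton n →* Houghton n) (hφ : Function.Injective φ) :
    ∃ (ℓ : ℕ) (δ : Fin n → Fin n), 1 ≤ ℓ ∧ Function.Injective δ ∧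
      ∀ (i : Fin n) (hi : i ≠ ray0 n h0),
        HasTranslationVector (imageGen h0 φ i hi)
          (fun j => (ℓ : ℤ) *
            ((if j = δ i then 1 else 0) - (if j = δ (ray0 n h0) then 1 else 0))) := by
  obtain ⟨F, hF⟩ := (hasTranslationVector_zero_of_mul_self (imageAlpha_mem φ)
    (imageAlpha_mul_self φ)).exists_finset_iff_apply_ne
  choose m hm using fun i (hi : i ≠ ray0 n h0) => imageGen_mem φ i hi
  obtain ⟨j₀, ℓ, hℓ, hsrc⟩ := exists_source_ray φ hφ hF hn
  choose t ht using exists_target_ray φ hφ hF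
  obtain ⟨δ, hδ, hvec⟩ := exists_injective_of_source_target m ℓ j₀ t
    (fun i hi => (hm i hi).sum_eq_zero) (fun i hi => hsrc i hi _ (hm i hi))
    (fun i hi => (ht i hi).1 _ (hm i hi)) (fun i hi j hj hji => (ht i hi).2 j hj hji _ (hm j hj))
  exact ⟨ℓ, δ, hℓ, hδ, fun i hi => hvec i hi ▸ hm i hi⟩
end

section
/- Let n ≥ 2 and let φ : H_n → H_n be an injective group homomorphism. Then a point x ∈ X_n has infinite orbit under φ(g) for some g ∈ H_n if and only if x has infinite orbit under φ(g_i) for some i ∈ {2,…,n}; that is, ⋃_{g ∈ H_n} Es(φ(g)) = ⋃_{i=2}^{n} Es(φ(g_i)). -/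
/-!
Let `S` be the set of points whose orbits under all `φ(g_i)` are finite. The heart of the proof
is that `φ(σ)` maps `S` into itself for every finitary `σ`. It suffices to treat
transpositions, and, after conjugating, transpositions `τ` of two points of a line `R_1 ∪ R_j`.
If `φ(g_i)` had an infinite orbit through `φ(τ) z` with `z ∈ S`, there would be words `w_k` in
`g_i, g_j` fixing `z` under `φ` whose conjugates `w_k τ w_k⁻¹` are pairwise disjoint
transpositions, while the points `φ(w_k τ w_k⁻¹) z = φ(w_k) φ(τ) z` are pairwise distinct.
But a commuting family of finitary permutations cannot move a point injectively.

Now let `x ∈ S` and `g ∈ H_n`, and let `D` be a common period of `x` under the `φ(g_i)`. Since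
translation vectors sum to zero, `g^D` has the same translation vector as a product `w` of powers
`g_i^{D c_i}`, and `φ(w)` fixes `x`. Hence `φ(g^D)^t x = φ(σ_t) x` with `σ_t` finitary, so the
whole forward orbit lies in `S`. Far out on a ray along which some `φ(g_i)` translates, every
point has an infinite `φ(g_i)`-orbit. So the far points of `S` lie on rays along which every
`φ(g_i)`, and therefore `φ(g^D)`, eventually acts trivially, and the orbit of `x` must be finite.
-/

open Function Filter Equiv

section Orbits

variable {α : Type*} {f : Perm α} {x : α}

theorem zpow_sub_apply_eq_self {a b : ℤ} (h : (f ^ a) x = (f ^ b) x) : (f ^ (a - b)) x = x := by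
  rw [sub_eq_neg_add, zpow_add, Perm.mul_apply, h, ← Perm.mul_apply, ← zpow_add, neg_add_cancel,
    zpow_zero, Perm.one_apply]

theorem InfiniteOrbit.zpow_apply_injective (h : InfiniteOrbit f x) :
    Injective fun k : ℤ => (f ^ k) x := by
  intro a b hab
  by_contra hne
  set e := a - b
  have he : (f ^ e) x = x := zpow_sub_apply_eq_self hab
  have hmod (k : ℤ) : (f ^ (k % e)) x = (f ^ k) x := by
    conv_rhs => rw [← Int.emod_add_mul_ediv k e, zpow_add, Perm.mul_apply, zpow_mul,
      Perm.zpow_apply_eq_self_of_apply_eq_self he]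
  refine h ((Set.finite_Ico 0 (e.natAbs : ℤ)).image (fun k : ℤ => (f ^ k) x) |>.subset ?_)
  rintro _ ⟨k, rfl⟩
  exact ⟨k % e, ⟨Int.emod_nonneg k (by omega), Int.emod_lt k (by omega)⟩, hmod k⟩

theorem InfiniteOrbit.pow_apply_injective (h : InfiniteOrbit f x) :
    Injective fun k : ℕ => (f ^ k) x := fun a b hab =>
  Int.ofNat_inj.mp <| h.zpow_apply_injective <| by simpa only [zpow_natCast] using hab

theorem not_infiniteOrbit_of_pow_apply_eq_self {e : ℕ} (he : 0 < e) (h : (f ^ e) x = x) :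
    ¬ InfiniteOrbit f x := fun hf =>
  he.ne' <| hf.pow_apply_injective <| by simpa using h

theorem exists_pow_apply_eq_self_of_not_infiniteOrbit (h : ¬ InfiniteOrbit f x) :
    ∃ e : ℕ, 0 < e ∧ (f ^ e) x = x := by
  obtain ⟨a, b, hab, hne⟩ : ∃ a b : ℤ, (f ^ a) x = (f ^ b) x ∧ a ≠ b := by
    by_contra! hinj
    exact h (Set.infinite_range_of_injective hinj)
  have hfix : (f ^ (a - b)) x = x := zpow_sub_apply_eq_self hab
  refine ⟨(a - b).natAbs, by omega, ?_⟩
  rcases Int.natAbs_eq (a - b) with h' | h'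
  · rwa [← zpow_natCast, ← h']
  · rw [← zpow_natCast, ← neg_eq_iff_eq_neg.mpr h', zpow_neg, Perm.inv_eq_iff_eq, hfix]

theorem pow_apply_eq_self_of_dvd {d e : ℕ} (h : (f ^ d) x = x) (hde : d ∣ e) :
    (f ^ e) x = x := by
  obtain ⟨c, rfl⟩ := hde
  rw [pow_mul]
  exact Perm.pow_apply_eq_self_of_apply_eq_self h c

theorem exists_common_period {ι : Type*} [Fintype ι] {g : ι → Perm α}
    (h : ∀ i, ¬ InfiniteOrbit (g i) x) : ∃ D : ℕ, 0 < D ∧ ∀ i, (g i ^ D) x = x := by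
  choose e he hex using fun i => exists_pow_apply_eq_self_of_not_infiniteOrbit (h i)
  exact ⟨∏ i, e i, Finset.prod_pos fun i _ => he i, fun i =>
    pow_apply_eq_self_of_dvd (hex i) (Finset.dvd_prod_of_mem e (Finset.mem_univ i))⟩

theorem permOrbit_inv : permOrbit f⁻¹ x = permOrbit f x := by
  ext y
  constructor <;> rintro ⟨k, rfl⟩ <;> exact ⟨-k, by simp [inv_zpow']⟩

theorem infiniteOrbit_inv_iff : InfiniteOrbit f⁻¹ x ↔ InfiniteOrbit f x := by
  rw [InfiniteOrbit, InfiniteOrbit, permOrbit_inv]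

/-- Some `C t₀` moves `z`, hence, by commutation, it moves every `C t z` with `t ≠ t₀`. -/
theorem not_injective_apply_of_pairwise_commute {ι : Type*} [Infinite ι] {C : ι → Perm α}
    (hcomm : Pairwise fun s t => Commute (C s) (C t)) (hfin : ∀ t, {y | C t y ≠ y}.Finite)
    (z : α) : ¬ Injective fun t => C t z := by
  intro hinj
  obtain ⟨t₀, ht₀⟩ : ∃ t₀, C t₀ z ≠ z := by
    obtain ⟨s, t, hst⟩ := exists_pair_ne ι
    by_contra! hfix
    exact hst (hinj (by simp only [hfix]))
  refine Set.infinite_of_injOn_mapsTo (f := fun t => C t z) hinj.injOn ?_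
    (Set.finite_singleton t₀).infinite_compl (hfin t₀)
  intro t ht hfix
  rw [← Perm.mul_apply, (hcomm ht).symm.eq, Perm.mul_apply] at hfix
  exact ht₀ ((C t).injective hfix)

theorem Equiv.commute_swap_swap [DecidableEq α] {a b c d : α} (hac : a ≠ c)
    (had : a ≠ d) (hbc : b ≠ c) (hbd : b ≠ d) : Commute (swap a b) (swap c d) := by
  refine Perm.Disjoint.commute fun x => ?_
  by_cases hx : x = a ∨ x = b
  · right
    rcases hx with rfl | rfl
    exacts [swap_apply_of_ne_of_ne hac had, swap_apply_of_ne_of_ne hbc hbd]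
  · push Not at hx
    exact .inl (swap_apply_of_ne_of_ne hx.1 hx.2)

end Orbits

section Houghton

variable {n : ℕ} (h0 : 0 < n) (φ : Houghton n →* Houghton n) {z : XH n}

theorem HasTranslationVector.unique {g : Perm (XH n)} {m m' : Fin n → ℤ}
    (h : HasTranslationVector g m) (h' : HasTranslationVector g m') : m = m' := by
  obtain ⟨K, hK⟩ := h
  obtain ⟨K', hK'⟩ := h'
  funext r
  set p := (K ∪ K').sup Prod.snd + 1
  have hp : ((r, p) : XH n) ∉ K ∪ K' := fun hmem => by
    have := Finset.le_sup (f := Prod.snd) hmem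
    omega
  have h1 := (hK (r, p) fun hc => hp (Finset.mem_union_left _ hc)).2
  have h2 := (hK' (r, p) fun hc => hp (Finset.mem_union_right _ hc)).2
  rw [h1] at h2
  exact add_left_cancel h2

theorem HasTranslationVector.mul_s13 {a b : Perm (XH n)} {ma mb : Fin n → ℤ}
    (ha : HasTranslationVector a ma) (hb : HasTranslationVector b mb) :
    HasTranslationVector (a * b) (ma + mb) := by
  classical
  obtain ⟨Ka, hKa⟩ := ha
  obtain ⟨Kb, hKb⟩ := hb
  refine ⟨Kb ∪ Ka.image b.symm, fun x hx => ?_⟩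
  simp only [Finset.mem_union, Finset.mem_image, not_or, not_exists, not_and] at hx
  obtain ⟨hb1, hb2⟩ := hKb x hx.1
  obtain ⟨ha1, ha2⟩ := hKa (b x) fun hc => hx.2 _ hc (b.symm_apply_apply x)
  refine ⟨by rw [Perm.mul_apply, ha1, hb1], ?_⟩
  rw [Perm.mul_apply, ha2, hb1, hb2, Pi.add_apply]
  ring

noncomputable def translation (g : Houghton n) : Fin n → ℤ := g.2.choose

theorem translation_spec (g : Houghton n) :
    HasTranslationVector (g : Perm (XH n)) (translation g) :=
  g.2.choose_spec

theorem translation_eq_of_hasTranslationVector {g : Houghton n} {m : Fin n → ℤ}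
    (h : HasTranslationVector (g : Perm (XH n)) m) : translation g = m :=
  (translation_spec g).unique h

theorem translation_mul (a b : Houghton n) : translation (a * b) = translation a + translation b :=
  translation_eq_of_hasTranslationVector ((translation_spec a).mul_s13 (translation_spec b))

theorem translation_one : translation (1 : Houghton n) = 0 :=
  translation_eq_of_hasTranslationVector ⟨∅, fun x _ => by simp⟩

theorem translation_inv (a : Houghton n) : translation a⁻¹ = -translation a :=
  eq_neg_of_add_eq_zero_left <| by rw [← translation_mul, inv_mul_cancel, translation_one]

theorem translation_zpow (a : Houghton n) (k : ℤ) :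
    translation (a ^ k) = k • translation a := by
  induction k using Int.induction_on with
  | zero => simp [translation_one]
  | succ k ih => rw [zpow_add_one, translation_mul, ih, add_smul, one_smul]
  | pred k ih =>
    rw [zpow_sub_one, translation_mul, ih, translation_inv, sub_smul, one_smul, sub_eq_add_neg]

theorem translation_pow (a : Houghton n) (k : ℕ) : translation (a ^ k) = k • translation a := by
  rw [← zpow_natCast, translation_zpow, natCast_zsmul]

theorem translation_list_prod (l : List (Houghton n)) :
    translation l.prod = (l.map translation).sum := by
  induction l with
  | nil => exact translation_one
  | cons a l ih => rw [List.prod_cons, translation_mul, ih, List.map_cons, List.sum_cons]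

theorem translation_eq_zero_of_mul_self_eq_one {a : Houghton n} (h : a * a = 1) :
    translation a = 0 := by
  have h2 : translation a + translation a = 0 := by rw [← translation_mul, h, translation_one]
  funext r
  have := congrFun h2 r
  simp only [Pi.add_apply, Pi.zero_apply] at this ⊢
  omega

theorem mem_FSymIn_of_translation_eq_zero {g : Houghton n} (h : translation g = 0) :
    g ∈ FSymIn n := by
  obtain ⟨K, hK⟩ := translation_spec g
  refine K.finite_toSet.subset fun x hx => ?_
  by_contra hxK
  obtain ⟨h1, h2⟩ := hK x hxK
  rw [h, Pi.zero_apply, add_zero, Nat.cast_inj] at h2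
  exact hx (Prod.ext h1 h2)

def block (h : Fin n → ℕ) : Finset (XH n) :=
  (Finset.univ.sigma fun i => Finset.range (h i)).map (Equiv.sigmaEquivProd _ _).toEmbedding

theorem mem_block {h : Fin n → ℕ} {x : XH n} : x ∈ block h ↔ x.2 < h x.1 := by
  simp [block]

theorem card_block (h : Fin n → ℕ) : (block h).card = ∑ i, h i := by
  simp [block, Finset.card_sigma]

/-- For large `P`, `g` maps the first `P` points of every ray `R_i` into the first `P + m i`
points of `R_i`; compare cardinalities. -/
theorem HasTranslationVector.sum_nonneg {g : Perm (XH n)} {m : Fin n → ℤ}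
    (hg : HasTranslationVector g m) : 0 ≤ ∑ i, m i := by
  classical
  obtain ⟨K, hK⟩ := hg
  set M := ∑ i, (m i).natAbs
  have hM (i : Fin n) : (m i).natAbs ≤ M :=
    Finset.single_le_sum (f := fun i => (m i).natAbs) (fun _ _ => Nat.zero_le _) (Finset.mem_univ i)
  set P := (K.image g).sup Prod.snd + M + 1
  have hsub : (block fun _ => P).image g ⊆ block fun i => (P + m i).toNat := by
    intro y hy
    obtain ⟨x, hx, rfl⟩ := Finset.mem_image.mp hy
    rw [mem_block] at hx ⊢
    by_cases hxK : x ∈ K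
    · have := Finset.le_sup (f := Prod.snd) (Finset.mem_image_of_mem g hxK)
      have := hM (g x).1
      omega
    · obtain ⟨h1, h2⟩ := hK x hxK
      rw [h1]
      omega
  have hcard := Finset.card_le_card hsub
  rw [Finset.card_image_of_injective _ g.injective, card_block, card_block] at hcard
  have hcast : ∑ i, ((P + m i).toNat : ℤ) = ∑ i, ((P : ℤ) + m i) :=
    Finset.sum_congr rfl fun i _ => Int.toNat_of_nonneg (by have := hM i; omega)
  have := (Nat.cast_le (α := ℤ)).mpr hcard
  push_cast at this
  rw [hcast, Finset.sum_add_distrib] at this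
  linarith

theorem sum_translation_eq_zero (g : Houghton n) : ∑ i, translation g i = 0 := by
  have h := (translation_spec g⁻¹).sum_nonneg
  simp only [translation_inv, Pi.neg_apply, Finset.sum_neg_distrib, Left.nonneg_neg_iff] at h
  exact le_antisymm h (translation_spec g).sum_nonneg

theorem eventually_cofinite_lt_snd (B : ℕ) : ∀ᶠ z : XH n in cofinite, B < z.2 :=
  eventually_cofinite.mpr <| (Set.finite_univ.prod (Set.finite_Iic B)).subset fun _ hz =>
    ⟨trivial, not_lt.mp hz⟩

theorem HasTranslationVector.eventually_apply_eq_self {g : Perm (XH n)} {m : Fin n → ℤ}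
    (hg : HasTranslationVector g m) : ∀ᶠ z in cofinite, m z.1 = 0 → g z = z := by
  obtain ⟨K, hK⟩ := hg
  filter_upwards [K.eventually_cofinite_notMem] with z hz hm
  obtain ⟨h1, h2⟩ := hK z hz
  rw [hm, add_zero, Nat.cast_inj] at h2
  exact Prod.ext h1 h2

theorem HasTranslationVector.eventually_infiniteOrbit {g : Perm (XH n)} {m : Fin n → ℤ}
    (hg : HasTranslationVector g m) : ∀ᶠ z in cofinite, 0 < m z.1 → InfiniteOrbit g z := by
  obtain ⟨K, hK⟩ := hg
  filter_upwards [eventually_cofinite_lt_snd (K.sup Prod.snd)] with z hz hm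
  have hpow (k : ℕ) : (g ^ k) z = (z.1, z.2 + k * (m z.1).toNat) := by
    induction k with
    | zero => simp
    | succ k ih =>
      have hnot : (z.1, z.2 + k * (m z.1).toNat) ∉ K := fun hc => by
        have := Finset.le_sup (f := Prod.snd) hc
        simp only at this
        nlinarith
      obtain ⟨h1, h2⟩ := hK _ hnot
      rw [pow_succ', Perm.mul_apply, ih]
      refine Prod.ext h1 ?_
      have ht : ((m z.1).toNat : ℤ) = m z.1 := Int.toNat_of_nonneg hm.le
      zify
      rw [h2]
      push_cast
      rw [ht]
      ring
  refine Set.infinite_of_injective_forall_mem (f := fun k : ℕ => (g ^ k) z) (fun a b hab => ?_)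
    fun k => ⟨k, by simp only [zpow_natCast]⟩
  simp only [hpow, Prod.mk.injEq, add_right_inj, true_and] at hab
  exact Nat.eq_of_mul_eq_mul_right (by omega) hab

theorem eventually_infiniteOrbit_of_translation_ne_zero (g : Houghton n) :
    ∀ᶠ z in cofinite, translation g z.1 ≠ 0 → InfiniteOrbit (g : Perm (XH n)) z := by
  filter_upwards [(translation_spec g).eventually_infiniteOrbit,
    (translation_spec g⁻¹).eventually_infiniteOrbit]
    with z hpos hneg hne
  rcases hne.lt_or_gt with h | h
  · rw [← infiniteOrbit_inv_iff]
    exact hneg (by rw [translation_inv, Pi.neg_apply]; omega)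
  · exact hpos h

theorem hSwap_mul_self (P Q : XH n) : hSwap P Q * hSwap P Q = 1 :=
  Subtype.ext (Equiv.swap_mul_self P Q)

theorem hSwap_inv (P Q : XH n) : (hSwap P Q)⁻¹ = hSwap P Q :=
  inv_eq_of_mul_eq_one_right (hSwap_mul_self P Q)

theorem FSymIn_le_closure_hSwap :
    FSymIn n ≤ Subgroup.closure {τ | ∃ P Q : XH n, hSwap P Q = τ} := by
  intro σ hσ
  have hcl : (σ : Perm (XH n)) ∈ Subgroup.closure {τ | τ.IsSwap} := mem_closure_isSwap'.mpr hσ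
  have hle : Subgroup.closure {τ : Perm (XH n) | τ.IsSwap} ≤
      (Subgroup.closure {τ | ∃ P Q : XH n, hSwap P Q = τ}).map (Houghton n).subtype := by
    rw [MonoidHom.map_closure]
    refine Subgroup.closure_mono ?_
    rintro _ ⟨P, Q, -, rfl⟩
    exact ⟨hSwap P Q, ⟨P, Q, rfl⟩, rfl⟩
  obtain ⟨τ, hτ, h⟩ := Subgroup.mem_map.mp (hle hcl)
  rwa [← Subtype.ext h]

theorem translation_map_hSwap (P Q : XH n) : translation (φ (hSwap P Q)) = 0 :=
  translation_eq_zero_of_mul_self_eq_one (by rw [← map_mul, hSwap_mul_self, map_one])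

theorem translation_map_eq_zero_of_mem_FSymIn {σ : Houghton n} (hσ : σ ∈ FSymIn n) :
    translation (φ σ) = 0 := by
  refine Subgroup.closure_induction (p := fun σ _ => translation (φ σ) = 0) ?_ ?_ ?_ ?_
    (FSymIn_le_closure_hSwap hσ)
  · rintro _ ⟨P, Q, rfl⟩
    exact translation_map_hSwap φ P Q
  · rw [map_one, translation_one]
  · intro a b _ _ ha hb
    rw [map_mul, translation_mul, ha, hb, add_zero]
  · intro a _ ha
    rw [map_inv, translation_inv, ha, neg_zero]

theorem mul_inv_mem_FSymIn_of_translation_eq {a b : Houghton n}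
    (h : translation a = translation b) :
    a * b⁻¹ ∈ FSymIn n :=
  mem_FSymIn_of_translation_eq_zero (by rw [translation_mul, translation_inv, h, add_neg_cancel])

theorem translation_map_eq_of_translation_eq {a b : Houghton n}
    (h : translation a = translation b) :
    translation (φ a) = translation (φ b) := by
  have := translation_map_eq_zero_of_mem_FSymIn φ (mul_inv_mem_FSymIn_of_translation_eq h)
  rwa [map_mul, map_inv, translation_mul, translation_inv, add_neg_eq_zero] at this

/-- The line `R_1 ∪ R_j`, parametrised by `ℤ` so that `g_j` acts as `m ↦ m + 1`:
the negative integers run down `R_1`, the nonnegative ones up `R_j`. -/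
def linePoint (j : Fin n) : ℤ → XH n
  | .ofNat p => (j, p)
  | .negSucc p => (ray0 n h0, p)

theorem gGen_linePoint (j : Fin n) (hj : j ≠ ray0 n h0) (m : ℤ) :
    gGen n h0 j hj (linePoint h0 j m) = linePoint h0 j (m + 1) := by
  change gFun n h0 j _ = _
  match m with
  | .ofNat p => simp [linePoint, gFun, hj]; rfl
  | .negSucc 0 => simp [linePoint, gFun]
  | .negSucc (p + 1) => simp [linePoint, gFun]; rfl

theorem hGen_pow_linePoint (j : Fin n) (hj : j ≠ ray0 n h0) (b : ℕ) (m : ℤ) :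
    ((hGen n h0 j hj ^ b : Houghton n) : Perm (XH n)) (linePoint h0 j m) =
      linePoint h0 j (m + b) := by
  induction b generalizing m with
  | zero => simp
  | succ b ih =>
    rw [pow_succ', Subgroup.coe_mul, Perm.mul_apply, ih]
    exact (gGen_linePoint h0 j hj _).trans (by push_cast; ring_nf)

theorem hGen_pow_apply_of_ne {i : Fin n} (hi : i ≠ ray0 n h0) (a : ℕ) {x : XH n}
    (hx0 : x.1 ≠ ray0 n h0) (hxi : x.1 ≠ i) :
    ((hGen n h0 i hi ^ a : Houghton n) : Perm (XH n)) x = x := by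
  rw [SubmonoidClass.coe_pow]
  refine Perm.pow_apply_eq_self_of_apply_eq_self ?_ a
  change gFun n h0 i x = x
  simp [gFun, hx0, hxi]

theorem linePoint_injective {j : Fin n} (hj : j ≠ ray0 n h0) : Injective (linePoint h0 j) := by
  rintro (a | a) (b | b) h <;> simp_all [linePoint, Prod.ext_iff, Ne.symm hj]

theorem exists_linePoint_eq (j : Fin n) {P : XH n} (hP : P.1 = ray0 n h0 ∨ P.1 = j) :
    ∃ m, linePoint h0 j m = P := by
  obtain ⟨r, p⟩ := P
  rcases hP with rfl | rfl
  exacts [⟨.negSucc p, rfl⟩, ⟨.ofNat p, rfl⟩]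

theorem linePoint_of_neg (i j : Fin n) {m : ℤ} (hm : m < 0) :
    linePoint h0 j m = linePoint h0 i m := by
  obtain ⟨p, rfl⟩ := Int.eq_negSucc_of_lt_zero hm
  rfl

theorem linePoint_fst_of_nonneg (j : Fin n) {m : ℤ} (hm : 0 ≤ m) :
    (linePoint h0 j m).1 = j := by
  lift m to ℕ using hm
  rfl

theorem hSwap_comm (P Q : XH n) : hSwap P Q = hSwap Q P :=
  Subtype.ext (swap_comm P Q)

theorem hSwap_conj (w : Houghton n) (P Q : XH n) :
    w * hSwap P Q * w⁻¹ = hSwap ((w : Perm (XH n)) P) ((w : Perm (XH n)) Q) :=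
  Subtype.ext (swap_apply_apply _ P Q).symm

def lineSwap (j : Fin n) (m m' : ℤ) : Houghton n :=
  hSwap (linePoint h0 j m) (linePoint h0 j m')

theorem hGen_pow_conj_lineSwap {j : Fin n} (hj : j ≠ ray0 n h0) (b : ℕ) (m m' : ℤ) :
    hGen n h0 j hj ^ b * lineSwap h0 j m m' * (hGen n h0 j hj ^ b)⁻¹ =
      lineSwap h0 j (m + b) (m' + b) := by
  rw [lineSwap, hSwap_conj, hGen_pow_linePoint, hGen_pow_linePoint, lineSwap]

theorem hGen_pow_conj_lineSwap_of_ne {i j : Fin n} (hi : i ≠ ray0 n h0) (hj : j ≠ ray0 n h0)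
    (hij : i ≠ j) (a : ℕ) {m m' : ℤ} (hm : 0 ≤ m) (hm' : 0 ≤ m') :
    hGen n h0 i hi ^ a * lineSwap h0 j m m' * (hGen n h0 i hi ^ a)⁻¹ = lineSwap h0 j m m' := by
  have hfix {k : ℤ} (hk : 0 ≤ k) :
      ((hGen n h0 i hi ^ a : Houghton n) : Perm (XH n)) (linePoint h0 j k) = linePoint h0 j k :=
    hGen_pow_apply_of_ne h0 hi a (by rwa [linePoint_fst_of_nonneg h0 j hk])
      (by rw [linePoint_fst_of_nonneg h0 j hk]; exact Ne.symm hij)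
  rw [lineSwap, hSwap_conj, hfix hm, hfix hm']

theorem commute_lineSwap {j : Fin n} (hj : j ≠ ray0 n h0) {m m' s t : ℤ}
    (h : |m - m'| < |s - t|) :
    Commute (lineSwap h0 j (m + s) (m' + s)) (lineSwap h0 j (m + t) (m' + t)) := by
  have hinj := linePoint_injective h0 hj
  have hst : s ≠ t := fun hst => by simp [hst] at h; exact (abs_nonneg _).not_gt h
  have h₁ : m + s ≠ m' + t := fun he => by
    rw [show s - t = m' - m by linarith, abs_sub_comm] at h
    exact h.false
  have h₂ : m' + s ≠ m + t := fun he => by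
    rw [show s - t = m - m' by linarith] at h
    exact h.false
  exact Subtype.ext <| commute_swap_swap (hinj.ne (by omega)) (hinj.ne h₁) (hinj.ne h₂)
    (hinj.ne (by omega))

def genInessential : Set (XH n) :=
  {z | ∀ (i : Fin n) (hi : i ≠ ray0 n h0), ¬ InfiniteOrbit (imageGen h0 φ i hi) z}

theorem exists_common_period_of_mem_genInessential (hz : z ∈ genInessential h0 φ) :
    ∃ d : ℕ, 0 < d ∧
      ∀ (i : Fin n) (hi : i ≠ ray0 n h0), (imageGen h0 φ i hi ^ d) z = z := by
  obtain ⟨d, hd, h⟩ := exists_common_period (g := fun i : {i // i ≠ ray0 n h0} =>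
    imageGen h0 φ i.1 i.2) fun i => hz i.1 i.2
  exact ⟨d, hd, fun i hi => h ⟨i, hi⟩⟩

theorem coe_map_hGen_pow {i : Fin n} (hi : i ≠ ray0 n h0) (b : ℕ) :
    ((φ (hGen n h0 i hi ^ b) : Houghton n) : Perm (XH n)) = imageGen h0 φ i hi ^ b := by
  rw [map_pow, SubmonoidClass.coe_pow, imageGen]

/-- If the conjugates `w_k τ w_k⁻¹` of a line transposition `τ` are spread out along the line,
they pairwise commute, so by `not_injective_apply_of_pairwise_commute` the points
`φ(w_k τ w_k⁻¹) z = φ(w_k) φ(τ) z` cannot all be distinct. -/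
theorem not_injective_apply_lineSwap {j : Fin n} (hj : j ≠ ray0 n h0) {m m' : ℤ} {N : ℕ}
    (hN : |m - m'| < N) (w : ℕ → Houghton n)
    (hconj : ∀ k : ℕ, w k * lineSwap h0 j m m' * (w k)⁻¹ =
      lineSwap h0 j (m + N * (k + 1)) (m' + N * (k + 1)))
    (hfix : ∀ k, ((φ (w k) : Houghton n) : Perm (XH n)) z = z) :
    ¬ Injective fun k =>
      ((φ (w k) : Houghton n) : Perm (XH n)) ((φ (lineSwap h0 j m m') : Perm (XH n)) z) := by
  have happly (k : ℕ) : ((φ (w k) : Houghton n) : Perm (XH n))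
      ((φ (lineSwap h0 j m m') : Perm (XH n)) z) =
        (φ (lineSwap h0 j (m + N * (k + 1)) (m' + N * (k + 1))) : Perm (XH n)) z := by
    rw [← hconj, map_mul, map_mul, map_inv, Subgroup.coe_mul, Subgroup.coe_mul,
      Subgroup.coe_inv, Perm.mul_apply, Perm.mul_apply, Perm.inv_eq_iff_eq.mpr (hfix k).symm]
  simp_rw [happly]
  refine not_injective_apply_of_pairwise_commute (fun k l hkl => ?_)
    (fun k => mem_FSymIn_of_translation_eq_zero (translation_map_hSwap φ _ _)) z
  refine ((commute_lineSwap h0 hj (lt_of_lt_of_le hN ?_)).map φ).map (Houghton n).subtype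
  have hkl' : (k : ℤ) - l ≠ 0 := sub_ne_zero.mpr (by exact_mod_cast hkl)
  rw [← mul_sub, abs_mul, Nat.abs_cast, add_sub_add_right_eq_sub]
  exact le_mul_of_one_le_right (Nat.cast_nonneg N) (Int.one_le_abs hkl')

theorem not_infiniteOrbit_lineSwap_self {j : Fin n} (hj : j ≠ ray0 n h0) (m m' : ℤ) {d : ℕ}
    (hd : 0 < d) (hz : (imageGen h0 φ j hj ^ d) z = z) :
    ¬ InfiniteOrbit (imageGen h0 φ j hj) ((φ (lineSwap h0 j m m') : Perm (XH n)) z) := by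
  intro hinf
  set N := d * ((m - m').natAbs + 1)
  have hNpos : 0 < N := by positivity
  have hN : |m - m'| < N := by
    have : (m - m').natAbs < N :=
      Nat.lt_of_lt_of_le (Nat.lt_succ_self _) (Nat.le_mul_of_pos_left _ hd)
    rw [← Int.natCast_natAbs]
    exact_mod_cast this
  refine not_injective_apply_lineSwap h0 φ hj hN (fun k => hGen n h0 j hj ^ (N * (k + 1)))
    (fun k => by rw [hGen_pow_conj_lineSwap]; push_cast; rfl) (z := z) (fun k => ?_) ?_
  · rw [coe_map_hGen_pow]
    exact pow_apply_eq_self_of_dvd hz (Dvd.intro _ rfl |>.mul_right _)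
  · simp only [coe_map_hGen_pow]
    exact hinf.pow_apply_injective.comp fun k l hkl => by
      simpa using Nat.eq_of_mul_eq_mul_left hNpos hkl

theorem not_infiniteOrbit_lineSwap_of_nonneg {i j : Fin n} (hi : i ≠ ray0 n h0)
    (hj : j ≠ ray0 n h0) (hij : i ≠ j) {m m' : ℤ} (hm : 0 ≤ m) (hm' : 0 ≤ m') {d : ℕ}
    (hd : 0 < d) (hz : (imageGen h0 φ i hi ^ d) z = z) :
    ¬ InfiniteOrbit (imageGen h0 φ i hi) ((φ (lineSwap h0 j m m') : Perm (XH n)) z) := by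
  refine not_infiniteOrbit_of_pow_apply_eq_self hd ?_
  have hcomm : hGen n h0 i hi ^ d * lineSwap h0 j m m' = lineSwap h0 j m m' * hGen n h0 i hi ^ d :=
    mul_inv_eq_iff_eq_mul.mp (hGen_pow_conj_lineSwap_of_ne h0 hi hj hij d hm hm')
  rw [← coe_map_hGen_pow, ← Perm.mul_apply, ← Subgroup.coe_mul, ← map_mul, hcomm, map_mul,
    Subgroup.coe_mul, Perm.mul_apply, coe_map_hGen_pow, hz]

/-- Here `w_k = g_i^{d(k+1)} g_j^{N(k+1)}`: the factor `g_j^{N(k+1)}` carries both points of the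
transposition onto `R_j`, where `g_i` does not move them, and it fixes `φ(τ) z` because `N` is a
multiple of the `φ(g_j)`-period of that point. -/
theorem not_infiniteOrbit_lineSwap_of_neg_of_nonneg {i j : Fin n} (hi : i ≠ ray0 n h0)
    (hj : j ≠ ray0 n h0) (hij : i ≠ j) {m m' : ℤ} (hm : m < 0) (hm' : 0 ≤ m') {d : ℕ}
    (hd : 0 < d) (hzi : (imageGen h0 φ i hi ^ d) z = z) (hzj : (imageGen h0 φ j hj ^ d) z = z) :
    ¬ InfiniteOrbit (imageGen h0 φ i hi) ((φ (lineSwap h0 j m m') : Perm (XH n)) z) := by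
  intro hinf
  obtain ⟨E, hE, hEz⟩ := exists_pow_apply_eq_self_of_not_infiniteOrbit
    (not_infiniteOrbit_lineSwap_self h0 φ hj m m' hd hzj)
  set N := d * E * (m.natAbs + m'.natAbs + 1)
  have hNpos : 0 < N := by positivity
  have hN : m.natAbs + m'.natAbs < N := Nat.lt_of_lt_of_le (Nat.lt_succ_self _)
    (Nat.le_mul_of_pos_left _ (by positivity))
  have hmN : |m - m'| < N := by
    rw [← Int.natCast_natAbs]
    exact_mod_cast (Int.natAbs_sub_le m m').trans_lt hN
  refine not_injective_apply_lineSwap h0 φ hj hmN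
    (fun k => hGen n h0 i hi ^ (d * (k + 1)) * hGen n h0 j hj ^ (N * (k + 1))) (z := z)
    (fun k => ?_) (fun k => ?_) ?_
  · have hpos : ∀ {l : ℤ}, l.natAbs < N → 0 ≤ l + (N * (k + 1) : ℕ) := fun hl => by
      have : N ≤ N * (k + 1) := Nat.le_mul_of_pos_right N k.succ_pos
      omega
    rw [mul_inv_rev, ← mul_assoc, mul_assoc _ _ (lineSwap h0 j m m'),
      mul_assoc _ _ (hGen n h0 j hj ^ (N * (k + 1)))⁻¹, hGen_pow_conj_lineSwap,
      hGen_pow_conj_lineSwap_of_ne h0 hi hj hij _ (hpos (by omega)) (hpos (by omega))]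
    push_cast
    rfl
  · rw [map_mul, Subgroup.coe_mul, Perm.mul_apply, coe_map_hGen_pow, coe_map_hGen_pow,
      pow_apply_eq_self_of_dvd hzj (Dvd.intro _ rfl |>.mul_right _ |>.mul_right _),
      pow_apply_eq_self_of_dvd hzi (Dvd.intro _ rfl)]
  · have hEN (k : ℕ) : (imageGen h0 φ j hj ^ (N * (k + 1)))
        ((φ (lineSwap h0 j m m') : Perm (XH n)) z) = (φ (lineSwap h0 j m m') : Perm (XH n)) z :=
      pow_apply_eq_self_of_dvd hEz (Dvd.intro_left d rfl |>.mul_right _ |>.mul_right _)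
    simp only [map_mul, Subgroup.coe_mul, Perm.mul_apply, coe_map_hGen_pow, hEN]
    exact hinf.pow_apply_injective.comp fun k l hkl => by
      simpa using Nat.eq_of_mul_eq_mul_left hd hkl

theorem mapsTo_lineSwap {j : Fin n} (hj : j ≠ ray0 n h0) (m m' : ℤ) :
    Set.MapsTo ((φ (lineSwap h0 j m m') : Houghton n) : Perm (XH n)) (genInessential h0 φ)
      (genInessential h0 φ) := by
  intro z hz i hi
  obtain ⟨d, hd, hdz⟩ := exists_common_period_of_mem_genInessential h0 φ hz
  by_cases hij : i = j
  · subst hij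
    exact not_infiniteOrbit_lineSwap_self h0 φ hi m m' hd (hdz i hi)
  rcases lt_or_ge m 0 with hm | hm <;> rcases lt_or_ge m' 0 with hm' | hm'
  · have : lineSwap h0 j m m' = lineSwap h0 i m m' := by
      rw [lineSwap, lineSwap, linePoint_of_neg h0 i j hm, linePoint_of_neg h0 i j hm']
    rw [this]
    exact not_infiniteOrbit_lineSwap_self h0 φ hi m m' hd (hdz i hi)
  · exact not_infiniteOrbit_lineSwap_of_neg_of_nonneg h0 φ hi hj hij hm hm' hd (hdz i hi)
      (hdz j hj)
  · rw [lineSwap, hSwap_comm]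
    exact not_infiniteOrbit_lineSwap_of_neg_of_nonneg h0 φ hi hj hij hm' hm hd (hdz i hi)
      (hdz j hj)
  · exact not_infiniteOrbit_lineSwap_of_nonneg h0 φ hi hj hij hm hm' hd (hdz i hi)

theorem mapsTo_hSwap_of_mem_line {j : Fin n} (hj : j ≠ ray0 n h0) {P Q : XH n}
    (hP : P.1 = ray0 n h0 ∨ P.1 = j) (hQ : Q.1 = ray0 n h0 ∨ Q.1 = j) :
    Set.MapsTo ((φ (hSwap P Q) : Houghton n) : Perm (XH n)) (genInessential h0 φ)
      (genInessential h0 φ) := by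
  obtain ⟨m, rfl⟩ := exists_linePoint_eq h0 j hP
  obtain ⟨m', rfl⟩ := exists_linePoint_eq h0 j hQ
  exact mapsTo_lineSwap h0 φ hj m m'

/-- Two points on distinct rays `R_i, R_j` (`i, j ≠ 1`) are exchanged by conjugating, with the
transposition of the first one and `(1,1)`, a transposition on the line `R_1 ∪ R_j`. -/
theorem mapsTo_hSwap (P Q : XH n) :
    Set.MapsTo ((φ (hSwap P Q) : Houghton n) : Perm (XH n)) (genInessential h0 φ)
      (genInessential h0 φ) := by
  wlog hP : P.1 ≠ ray0 n h0 generalizing P Q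
  · by_cases hQ : Q.1 = ray0 n h0
    · intro z hz i hi
      exact mapsTo_hSwap_of_mem_line h0 φ hi (.inl (not_not.mp hP)) (.inl hQ) hz i hi
    · rw [hSwap_comm]
      exact this Q P hQ
  by_cases hQ : Q.1 = ray0 n h0 ∨ Q.1 = P.1
  · exact mapsTo_hSwap_of_mem_line h0 φ hP (.inr rfl) hQ
  push Not at hQ
  set R : XH n := (ray0 n h0, 0)
  have hconj : hSwap P Q = hSwap P R * hSwap R Q * hSwap P R := by
    nth_rw 2 [← hSwap_inv P R]
    rw [hSwap_conj]
    congr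
    · exact (swap_apply_right P R).symm
    · exact (swap_apply_of_ne_of_ne (fun h => hQ.2 (by rw [h])) fun h => hQ.1 (by rw [h])).symm
  have hPR := mapsTo_hSwap_of_mem_line h0 φ hP (P := P) (Q := R) (.inr rfl) (.inl rfl)
  have hRQ := mapsTo_hSwap_of_mem_line h0 φ hQ.1 (P := R) (Q := Q) (.inl rfl) (.inr rfl)
  rw [hconj, map_mul, map_mul, Subgroup.coe_mul, Subgroup.coe_mul, Perm.coe_mul, Perm.coe_mul]
  exact hPR.comp (hRQ.comp hPR)

theorem mapsTo_of_mem_FSymIn {σ : Houghton n} (hσ : σ ∈ FSymIn n) :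
    Set.MapsTo ((φ σ : Houghton n) : Perm (XH n)) (genInessential h0 φ)
      (genInessential h0 φ) := by
  refine Subgroup.closure_induction'' (p := fun σ _ => Set.MapsTo
    ((φ σ : Houghton n) : Perm (XH n)) (genInessential h0 φ) (genInessential h0 φ))
    ?_ ?_ ?_ ?_ (FSymIn_le_closure_hSwap hσ)
  · rintro _ ⟨P, Q, rfl⟩
    exact mapsTo_hSwap h0 φ P Q
  · rintro _ ⟨P, Q, rfl⟩
    rw [hSwap_inv]
    exact mapsTo_hSwap h0 φ P Q
  · rw [map_one]
    exact Set.mapsTo_id _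
  · intro a b _ _ ha hb
    rw [map_mul, Subgroup.coe_mul, Perm.coe_mul]
    exact ha.comp hb

def gen (i : Fin n) : Houghton n :=
  if hi : i = ray0 n h0 then 1 else hGen n h0 i hi

theorem translation_gen (i : Fin n) :
    translation (gen h0 i) = Pi.single i 1 - Pi.single (ray0 n h0) 1 := by
  unfold gen
  split_ifs with hi
  · rw [translation_one, hi, sub_self]
  refine translation_eq_of_hasTranslationVector ⟨{(ray0 n h0, 0)}, ?_⟩
  rintro ⟨j, p⟩ hx
  rw [Finset.mem_singleton] at hx
  change (gFun n h0 i (j, p)).1 = j ∧ ((gFun n h0 i (j, p)).2 : ℤ) = p + _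
  simp only [gFun, Pi.sub_apply, Pi.single_apply]
  split_ifs <;> simp_all [Prod.ext_iff]
  omega

def genProd (c : Fin n → ℤ) : Houghton n :=
  (List.ofFn fun i => gen h0 i ^ c i).prod

theorem translation_map_genProd (c : Fin n → ℤ) :
    translation (φ (genProd h0 c)) = ∑ i, c i • translation (φ (gen h0 i)) := by
  rw [genProd, map_list_prod, translation_list_prod, List.map_ofFn, List.map_ofFn, List.sum_ofFn]
  simp only [Function.comp_apply, map_zpow, translation_zpow]

theorem translation_genProd {c : Fin n → ℤ} (hc : ∑ i, c i = 0) :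
    translation (genProd h0 c) = c := by
  rw [← MonoidHom.id_apply (Houghton n) (genProd h0 c), translation_map_genProd]
  simp only [MonoidHom.id_apply, translation_gen, smul_sub, Finset.sum_sub_distrib,
    ← Finset.sum_smul, hc, zero_smul, sub_zero]
  simp only [← Pi.single_smul', smul_eq_mul, mul_one]
  exact Finset.univ_sum_single c

theorem map_genProd_apply_eq_self {D : ℕ}
    (hD : ∀ (i : Fin n) (hi : i ≠ ray0 n h0), (imageGen h0 φ i hi ^ D) z = z) (k : Fin n → ℤ) :
    ((φ (genProd h0 ((D : ℤ) • k)) : Houghton n) : Perm (XH n)) z = z := by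
  let stab := (MulAction.stabilizer (Perm (XH n)) z).comap ((Houghton n).subtype.comp φ)
  have hgen (i : Fin n) : gen h0 i ^ ((D : ℤ) • k) i ∈ stab := by
    change ((φ (gen h0 i ^ _) : Houghton n) : Perm (XH n)) z = z
    unfold gen
    split_ifs with hi
    · simp
    · rw [map_zpow, SubgroupClass.coe_zpow, Pi.smul_apply, smul_eq_mul, zpow_mul, zpow_natCast]
      exact Perm.zpow_apply_eq_self_of_apply_eq_self (hD i hi) _
  exact stab.list_prod_mem fun w hw => by
    obtain ⟨i, rfl⟩ := List.mem_ofFn.mp hw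
    exact hgen i

/-- Writing `g^t = σ w^t` with `σ` finitary, the orbit point `φ(g)^t z = φ(σ) z` stays in
`genInessential` by `mapsTo_of_mem_FSymIn`. -/
theorem pow_apply_mem_genInessential {g w : Houghton n} (hgw : translation g = translation w)
    (hz : z ∈ genInessential h0 φ) (hw : ((φ w : Houghton n) : Perm (XH n)) z = z) (t : ℕ) :
    (((φ g : Houghton n) : Perm (XH n)) ^ t) z ∈ genInessential h0 φ := by
  have hσ : g ^ t * (w ^ t)⁻¹ ∈ FSymIn n :=
    mul_inv_mem_FSymIn_of_translation_eq (by rw [translation_pow, translation_pow, hgw])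
  have hwt : ((φ (w ^ t) : Houghton n) : Perm (XH n)) z = z := by
    rw [map_pow, SubmonoidClass.coe_pow]
    exact Perm.pow_apply_eq_self_of_apply_eq_self hw t
  have : (((φ g : Houghton n) : Perm (XH n)) ^ t) z =
      ((φ (g ^ t * (w ^ t)⁻¹) : Houghton n) : Perm (XH n)) z := by
    rw [map_mul, map_inv, Subgroup.coe_mul, Subgroup.coe_inv, Perm.mul_apply,
      Perm.inv_eq_iff_eq.mpr hwt.symm, map_pow, SubmonoidClass.coe_pow]
  rw [this]
  exact mapsTo_of_mem_FSymIn h0 φ hσ hz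

theorem eventually_translation_map_gen_eq_zero :
    ∀ᶠ z in cofinite,
      z ∈ genInessential h0 φ → ∀ i, translation (φ (gen h0 i)) z.1 = 0 := by
  have h := eventually_all.mpr fun i =>
    eventually_infiniteOrbit_of_translation_ne_zero (φ (gen h0 i))
  filter_upwards [h] with z hz hzS i
  by_cases hi : i = ray0 n h0
  · simp [gen, hi, translation_one]
  · by_contra hne
    have := hz i hne
    rw [gen, dif_neg hi] at this
    exact hzS i hi this

theorem not_infiniteOrbit_of_mem_genInessential {x : XH n} (hx : x ∈ genInessential h0 φ)
    (g : Houghton n) : ¬ InfiniteOrbit ((φ g : Houghton n) : Perm (XH n)) x := by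
  intro hg
  obtain ⟨D, hD, hDx⟩ := exists_common_period_of_mem_genInessential h0 φ hx
  set w := genProd h0 ((D : ℤ) • translation g)
  have hw : translation (g ^ D) = translation w := by
    rw [translation_genProd h0 (by simp [← Finset.mul_sum, sum_translation_eq_zero]),
      translation_pow, natCast_zsmul]
  have horbit :=
    pow_apply_mem_genInessential h0 φ hw hx (map_genProd_apply_eq_self h0 φ hDx _)
  have hinj : Injective fun t : ℕ => (((φ (g ^ D) : Houghton n) : Perm (XH n)) ^ t) x := by
    simp only [map_pow, SubmonoidClass.coe_pow, ← pow_mul]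
    exact hg.pow_apply_injective.comp (mul_right_injective₀ hD.ne')
  have hfix : ∀ᶠ z in cofinite, z ∈ genInessential h0 φ →
      ((φ (g ^ D) : Houghton n) : Perm (XH n)) z = z := by
    filter_upwards [eventually_translation_map_gen_eq_zero h0 φ,
      (translation_spec (φ (g ^ D))).eventually_apply_eq_self] with z hz hfix hzS
    refine hfix ?_
    rw [translation_map_eq_of_translation_eq φ hw, translation_map_genProd, Finset.sum_apply]
    simp [hz hzS]
  obtain ⟨t, ht⟩ := (hinj.tendsto_cofinite.eventually hfix).exists
  exact t.succ_ne_self (hinj (by simp only [pow_succ', Perm.mul_apply, ht (horbit t)]))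

end Houghton

theorem monomorphism_essential_points_union_general
    (n : ℕ) (h0 : 0 < n)
    (φ : Houghton n →* Houghton n)
    (x : XH n) :
    (∃ g : Houghton n, InfiniteOrbit ((φ g : Houghton n) : Equiv.Perm (XH n)) x) ↔
    (∃ (i : Fin n) (hi : i ≠ ray0 n h0), InfiniteOrbit (imageGen h0 φ i hi) x) := by
  refine ⟨fun ⟨g, hg⟩ => ?_, fun ⟨i, hi, h⟩ => ⟨hGen n h0 i hi, h⟩⟩
  by_contra! h
  exact not_infiniteOrbit_of_mem_genInessential h0 φ h g hg

/-- For `n ≥ 2` and an injective endomorphism `φ` of `H_n`, a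
point of `X_n` has infinite orbit under `φ(g)` for some `g ∈ H_n` if and only
if it has infinite orbit under `φ(g_i)` for some generator `g_i`:
`⋃_{g ∈ H_n} Es(φ(g)) = ⋃_{i=2}^{n} Es(φ(g_i))`. -/
theorem monomorphism_essential_points_union
    (n : ℕ) (hn : 2 ≤ n) (h0 : 0 < n)
    (φ : Houghton n →* Houghton n) (hφ : Function.Injective φ)
    (x : XH n) :
    (∃ g : Houghton n, InfiniteOrbit ((φ g : Houghton n) : Equiv.Perm (XH n)) x) ↔
    (∃ (i : Fin n) (hi : i ≠ ray0 n h0), InfiniteOrbit (imageGen h0 φ i hi) x) :=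
  monomorphism_essential_points_union_general n h0 φ x
end
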